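/- arXiv:2212.03772 — 7 statements merged into one kernel-verified Lean document; each statement's English description precedes it below -/
import Mathlib

section
/- Let K be a field of characteristic p > 0, q a power of p, and F := {a ∈ K : a^q = a} (a subfield of K with at most q elements). Let n ≥ 1, let f ∈ K[x₁,…,xₙ] be a nonzero polynomial, and let μ : Fⁿ → ℕ be a function such that, for every a = (a₁,…,aₙ) ∈ Fⁿ, f belongs to the μ(a)-th power of the maximal ideal (x₁−a₁,…,xₙ−aₙ). Then Σ_{a ∈ Fⁿ} μ(a) ≤ q^{n−1}·deg f, where deg f is the total degree of f. -/
open MvPolynomial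

namespace SumMultAux

noncomputable section

variable {K : Type*} [Field K] {n : ℕ}

/-- total degree of a monomial exponent -/
def wdeg {n : ℕ} (s : Fin n →₀ ℕ) : ℕ := s.sum fun _ e => e

lemma wdeg_add (u v : Fin n →₀ ℕ) : wdeg (u + v) = wdeg u + wdeg v := by
  simp [wdeg, Finsupp.sum_add_index']

lemma wdeg_eq_zero {s : Fin n →₀ ℕ} (h : wdeg s = 0) : s = 0 := by
  ext k
  by_contra hk
  have hk' : k ∈ s.support := Finsupp.mem_support_iff.mpr hk
  have : s k ≤ wdeg s := Finset.single_le_sum (f := fun i => s i) (fun _ _ => Nat.zero_le _) hk'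
  simp only [Finsupp.coe_zero, Pi.zero_apply] at hk
  omega

/-- the ideal of polynomials all of whose monomials have degree ≥ μ -/
def V (K : Type*) [Field K] (n : ℕ) (μ : ℕ) : Ideal (MvPolynomial (Fin n) K) where
  carrier := {g | ∀ s, wdeg s < μ → coeff s g = 0}
  add_mem' := by
    intro a b ha hb s hs
    simp [coeff_add, ha s hs, hb s hs]
  zero_mem' := by intro s _; simp
  smul_mem' := by
    intro p g hg s hs
    rw [smul_eq_mul, coeff_mul]
    apply Finset.sum_eq_zero
    rintro ⟨u, v⟩ huv
    rw [Finset.HasAntidiagonal.mem_antidiagonal] at huv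
    have : wdeg v < μ := by
      have := wdeg_add u v
      rw [huv] at this
      omega
    simp [hg v this]

lemma V_mul_le (a b : ℕ) : V K n a * V K n b ≤ V K n (a + b) := by
  rw [Ideal.mul_le]
  intro f hf g hg s hs
  rw [coeff_mul]
  apply Finset.sum_eq_zero
  rintro ⟨u, v⟩ huv
  rw [Finset.HasAntidiagonal.mem_antidiagonal] at huv
  have hw : wdeg u + wdeg v < a + b := by
    have := wdeg_add u v; rw [huv] at this; omega
  rcases lt_or_ge (wdeg u) a with h | h
  · simp [hf u h]
  · have : wdeg v < b := by omega
    simp [hg v this]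

def I0 (K : Type*) [Field K] (n : ℕ) : Ideal (MvPolynomial (Fin n) K) :=
  Ideal.span (Set.range fun k : Fin n => X k)

lemma I0_le_V1 : I0 K n ≤ V K n 1 := by
  rw [I0, Ideal.span_le]
  rintro _ ⟨k, rfl⟩ s hs
  rw [MvPolynomial.coeff_X']
  split_ifs with h
  · exfalso
    rw [← h] at hs
    simp [wdeg, Finsupp.sum_single_index] at hs
  · rfl

lemma I0_pow_le (μ : ℕ) : I0 K n ^ μ ≤ V K n μ := by
  induction μ with
  | zero => intro g _ s hs; omega
  | succ m ih =>
    rw [pow_succ]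
    calc I0 K n ^ m * I0 K n ≤ V K n m * V K n 1 := Ideal.mul_mono ih I0_le_V1
    _ ≤ V K n (m + 1) := V_mul_le m 1

lemma prod_X_pow_mem (s : Fin n →₀ ℕ) :
    (s.prod fun k e => (X k : MvPolynomial (Fin n) K) ^ e) ∈ I0 K n ^ wdeg s := by
  induction s using Finsupp.induction with
  | zero => simp [wdeg]
  | single_add a b f ha hb ih =>
    rw [Finsupp.prod_add_index' (by intro x; rw [pow_zero]) (by intro x y z; rw [pow_add])]
    have h1 : (Finsupp.single a b).prod (fun k e => (X k : MvPolynomial (Fin n) K) ^ e) = X a ^ b :=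
      Finsupp.prod_single_index (by rw [pow_zero])
    rw [h1, wdeg_add]
    have hX : (X a : MvPolynomial (Fin n) K) ∈ I0 K n :=
      Ideal.subset_span ⟨a, rfl⟩
    have : wdeg (Finsupp.single a b) = b := by
      simp [wdeg, Finsupp.sum_single_index]
    rw [this, pow_add]
    exact Ideal.mul_mem_mul (Ideal.pow_mem_pow hX b) ih

lemma V_le_I0_pow (μ : ℕ) : V K n μ ≤ I0 K n ^ μ := by
  intro g hg
  rw [← support_sum_monomial_coeff g]
  apply Ideal.sum_mem
  intro s hs
  have hws : μ ≤ wdeg s := by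
    by_contra h
    push_neg at h
    exact (mem_support_iff.mp hs) (hg s h)
  rw [monomial_eq]
  apply Ideal.mul_mem_left
  exact Ideal.pow_le_pow_right hws (prod_X_pow_mem s)

lemma mem_I0_pow_iff {g : MvPolynomial (Fin n) K} {μ : ℕ} :
    g ∈ I0 K n ^ μ ↔ ∀ s, wdeg s < μ → coeff s g = 0 :=
  ⟨fun h s hs => I0_pow_le μ h s hs, fun h => V_le_I0_pow μ h⟩

/-- translation by `a` -/
def tau (a : Fin n → K) : MvPolynomial (Fin n) K →ₐ[K] MvPolynomial (Fin n) K :=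
  aeval fun k => X k + C (a k)

lemma tau_neg_tau (a : Fin n → K) (f : MvPolynomial (Fin n) K) :
    tau (fun k => - a k) (tau a f) = f := by
  have h2 : (tau (fun k => - a k)).comp (tau a) = aeval X := by
    unfold tau
    rw [MvPolynomial.comp_aeval]
    congr 1
    funext i
    simp [map_add, aeval_X, aeval_C, algebraMap_eq]
  calc tau (fun k => - a k) (tau a f) = ((tau (fun k => - a k)).comp (tau a)) f := rfl
  _ = aeval X f := by rw [h2]
  _ = f := aeval_X_left_apply f

lemma tau_ne_zero (a : Fin n → K) {f : MvPolynomial (Fin n) K} (hf : f ≠ 0) :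
    tau a f ≠ 0 := by
  intro h
  apply hf
  have := tau_neg_tau a f
  rw [h, map_zero] at this
  exact this.symm

/-- the maximal ideal at `a` -/
def J (a : Fin n → K) : Ideal (MvPolynomial (Fin n) K) :=
  Ideal.span (Set.range fun k : Fin n => X k - C (a k))

lemma map_tau_J (a : Fin n → K) : Ideal.map (tau a) (J a) = I0 K n := by
  rw [J, Ideal.map_span, I0, ← Set.range_comp]
  have : ((tau a) ∘ fun k => X k - C (a k)) = fun k : Fin n => (X k : MvPolynomial (Fin n) K) := by
    funext k
    simp [tau, map_sub, aeval_X, aeval_C, algebraMap_eq]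
  rw [this]

lemma map_tau_I0 (a : Fin n → K) : Ideal.map (tau (fun k => - a k)) (I0 K n) = J a := by
  rw [I0, Ideal.map_span, J, ← Set.range_comp]
  have : ((tau fun k => - a k) ∘ fun k : Fin n => (X k : MvPolynomial (Fin n) K))
      = fun k => X k - C (a k) := by
    funext k
    simp [tau, aeval_X, sub_eq_add_neg]
  rw [this]

lemma mem_J_pow_iff {a : Fin n → K} {f : MvPolynomial (Fin n) K} {μ : ℕ} :
    f ∈ J a ^ μ ↔ ∀ s, wdeg s < μ → coeff s (tau a f) = 0 := by
  rw [← mem_I0_pow_iff]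
  constructor
  · intro h
    have : tau a f ∈ Ideal.map (tau a) (J a ^ μ) := Ideal.mem_map_of_mem _ h
    rwa [Ideal.map_pow, map_tau_J] at this
  · intro h
    have : tau (fun k => - a k) (tau a f) ∈ Ideal.map (tau (fun k => - a k)) (I0 K n ^ μ) :=
      Ideal.mem_map_of_mem _ h
    rwa [Ideal.map_pow, map_tau_I0, tau_neg_tau] at this

/-! ### univariate bridging -/

/-- apply `coeff i` to each coefficient of a polynomial over `MvPolynomial` -/
def cw (i : Fin n →₀ ℕ) (P : Polynomial (MvPolynomial (Fin n) K)) : Polynomial K :=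
  P.sum fun j c => Polynomial.monomial j (coeff i c)

lemma cw_coeff (i : Fin n →₀ ℕ) (P : Polynomial (MvPolynomial (Fin n) K)) (r : ℕ) :
    (cw i P).coeff r = coeff i (P.coeff r) := by
  rw [cw, Polynomial.sum_def, Polynomial.finset_sum_coeff]
  simp only [Polynomial.coeff_monomial]
  rw [Finset.sum_ite_eq' P.support r (fun j => coeff i (P.coeff j))]
  split_ifs with h
  · rfl
  · rw [Polynomial.notMem_support_iff.mp h, coeff_zero]

lemma cw_hasseDeriv (i : Fin n →₀ ℕ) (P : Polynomial (MvPolynomial (Fin n) K)) (r : ℕ) :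
    cw i (Polynomial.hasseDeriv r P) = Polynomial.hasseDeriv r (cw i P) := by
  ext k
  rw [cw_coeff, Polynomial.hasseDeriv_coeff, Polynomial.hasseDeriv_coeff, cw_coeff,
    ← nsmul_eq_mul, ← nsmul_eq_mul, MvPolynomial.coeff_smul]

lemma cw_natDegree_le (i : Fin n →₀ ℕ) (P : Polynomial (MvPolynomial (Fin n) K)) :
    (cw i P).natDegree ≤ P.natDegree := by
  rw [Polynomial.natDegree_le_iff_coeff_eq_zero]
  intro m hm
  rw [cw_coeff, Polynomial.coeff_eq_zero_of_natDegree_lt hm, coeff_zero]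

lemma cw_eval (i : Fin n →₀ ℕ) (b : K) (P : Polynomial (MvPolynomial (Fin n) K)) :
    Polynomial.eval b (cw i P) = coeff i (Polynomial.eval (C b) P) := by
  rw [Polynomial.eval_eq_sum_range' (Nat.lt_succ_of_le (cw_natDegree_le i P)),
    Polynomial.eval_eq_sum_range' (Nat.lt_succ_self P.natDegree),
    MvPolynomial.coeff_sum]
  apply Finset.sum_congr rfl
  intro r _
  rw [cw_coeff, ← MvPolynomial.C_pow, mul_comm (P.coeff r) (C (b ^ r) : MvPolynomial (Fin n) K),
    MvPolynomial.coeff_C_mul, mul_comm]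

lemma finSuccEquiv_tau (a : Fin n → K) (b : K) (f : MvPolynomial (Fin (n + 1)) K) :
    finSuccEquiv K n (tau (Fin.cons b a) f)
      = Polynomial.taylor (C b) ((finSuccEquiv K n f).map (tau a).toRingHom) := by
  have hC : ∀ c : K, finSuccEquiv K n (C c) = Polynomial.C (C c) := by
    intro c
    simp [finSuccEquiv_apply]
  have htauC : ∀ c : K, tau a (C c) = C c := by
    intro c
    simp [tau, aeval_C, algebraMap_eq]
  induction f using MvPolynomial.induction_on with
  | C c =>
      rw [show tau (Fin.cons b a) (C c) = C c by simp [tau, aeval_C, algebraMap_eq]]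
      rw [hC, Polynomial.map_C, AlgHom.toRingHom_eq_coe, RingHom.coe_coe, htauC,
        Polynomial.taylor_C]
  | add p q hp hq =>
      simp only [map_add, Polynomial.map_add, hp, hq]
  | mul_X p k hp =>
      simp only [map_mul, Polynomial.map_mul, Polynomial.taylor_mul, hp]
      refine congrArg (HMul.hMul _) ?_
      refine Fin.cases ?_ ?_ k
      · rw [show tau (Fin.cons b a) (X 0) = X 0 + C b by
          simp [tau, aeval_X, Fin.cons_zero]]
        rw [map_add, finSuccEquiv_X_zero, hC, Polynomial.map_X, Polynomial.taylor_X]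
      · intro j
        rw [show tau (Fin.cons b a) (X j.succ) = X j.succ + C (a j) by
          simp [tau, aeval_X, Fin.cons_succ]]
        rw [map_add, finSuccEquiv_X_succ, hC, Polynomial.map_C,
          AlgHom.toRingHom_eq_coe, RingHom.coe_coe]
        rw [show tau a (X j) = X j + C (a j) by simp [tau, aeval_X]]
        rw [Polynomial.taylor_C, ← Polynomial.C_add]

lemma taylor_cw_coeff (a : Fin n → K) (b : K) (i : Fin n →₀ ℕ)
    (f : MvPolynomial (Fin (n + 1)) K) (r : ℕ) :
    (Polynomial.taylor b (cw i ((finSuccEquiv K n f).map (tau a).toRingHom))).coeff r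
      = coeff (Finsupp.cons r i) (tau (Fin.cons b a) f) := by
  rw [Polynomial.taylor_coeff, ← cw_hasseDeriv, cw_eval, ← Polynomial.taylor_coeff,
    ← finSuccEquiv_tau, finSuccEquiv_coeff_coeff]

lemma wdeg_cons (r : ℕ) (i : Fin n →₀ ℕ) : wdeg (Finsupp.cons r i) = r + wdeg i :=
  Finsupp.sum_cons n i r

/-! ### the main induction -/

lemma key (q : ℕ) (hq1 : 1 ≤ q) (Fq : Finset K) (hFq : ∀ x : K, x ∈ Fq ↔ x ^ q = x)
    (hcard : Fq.card ≤ q) :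
    ∀ n (f : MvPolynomial (Fin n) K), f ≠ 0 →
    ∀ μ : (Fin n → K) → ℕ,
    (∀ a : Fin n → K, (∀ k, a k ^ q = a k) → f ∈ J a ^ μ a) →
    ∑ a ∈ Fintype.piFinset (fun _ : Fin n => Fq), μ a ≤ q ^ (n - 1) * f.totalDegree := by
  intro n
  induction n with
  | zero =>
      intro f hf μ hμ
      have hzero : ∀ a ∈ Fintype.piFinset (fun _ : Fin 0 => Fq), μ a = 0 := by
        intro a _
        by_contra h0
        have h1 : 1 ≤ μ a := Nat.one_le_iff_ne_zero.mpr h0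
        have hmem : f ∈ J a ^ μ a := hμ a (fun k => k.elim0)
        have hJ : J a = ⊥ := by
          rw [J, Set.range_eq_empty, Ideal.span_empty]
        have : f ∈ J a := by
          have h2 := Ideal.pow_le_pow_right h1 (I := J a)
          rw [pow_one] at h2
          exact h2 hmem
        rw [hJ, Ideal.mem_bot] at this
        exact hf this
      rw [Finset.sum_eq_zero hzero]
      exact Nat.zero_le _
  | succ n ih =>
      intro f hf μ hμ
      set F : Polynomial (MvPolynomial (Fin n) K) := finSuccEquiv K n f with hFdef
      have hF0 : F ≠ 0 := by
        intro h
        apply hf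
        apply (finSuccEquiv K n).injective
        rw [map_zero]
        exact h
      set t : ℕ := F.natDegree with htdef
      set ft : MvPolynomial (Fin n) K := F.coeff t with hftdef
      have hft0 : ft ≠ 0 := by
        have := Polynomial.leadingCoeff_ne_zero.mpr hF0
        rwa [Polynomial.leadingCoeff] at this
      -- lower bound on the multiplicity of `ft` at `a`
      set m : (Fin n → K) → ℕ :=
        fun a => sInf (wdeg '' ((tau a ft).support : Set (Fin n →₀ ℕ))) with hmdef
      have hsupp : ∀ a : Fin n → K, ((tau a ft).support : Set (Fin n →₀ ℕ)).Nonempty := by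
        intro a
        apply Finset.coe_nonempty.mpr
        apply Finset.nonempty_iff_ne_empty.mpr
        intro h
        exact tau_ne_zero a hft0 (support_eq_empty.mp h)
      have hm_low : ∀ (a : Fin n → K) (s : Fin n →₀ ℕ), wdeg s < m a → coeff s (tau a ft) = 0 := by
        intro a s hs
        by_contra h
        have hmem : s ∈ (tau a ft).support := mem_support_iff.mpr h
        have : m a ≤ wdeg s := Nat.sInf_le ⟨s, by exact_mod_cast hmem, rfl⟩
        omega
      have hm_ex : ∀ a : Fin n → K, ∃ i, i ∈ (tau a ft).support ∧ wdeg i = m a := by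
        intro a
        have hne : (wdeg '' ((tau a ft).support : Set (Fin n →₀ ℕ))).Nonempty :=
          (hsupp a).image _
        have := Nat.sInf_mem hne
        rcases this with ⟨s, hs, hws⟩
        exact ⟨s, by exact_mod_cast hs, hws⟩
      -- the induction hypothesis applied to ft
      have hih : ∑ a ∈ Fintype.piFinset (fun _ : Fin n => Fq), m a
          ≤ q ^ (n - 1) * ft.totalDegree := by
        apply ih ft hft0 m
        intro a _
        exact mem_J_pow_iff.mpr (hm_low a)
      -- the per-fiber bound
      have hfiber : ∀ a ∈ Fintype.piFinset (fun _ : Fin n => Fq),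
          ∑ b ∈ Fq, μ (Fin.cons b a : Fin (n + 1) → K) ≤ t + q * m a := by
        intro a ha
        have haF : ∀ k, a k ^ q = a k := fun k => (hFq _).mp (Fintype.mem_piFinset.mp ha k)
        obtain ⟨i, hisupp, hiw⟩ := hm_ex a
        set g : Polynomial K := cw i (F.map (tau a).toRingHom) with hgdef
        have hgt : g.coeff t = coeff i (tau a ft) := by
          rw [hgdef, cw_coeff, Polynomial.coeff_map]
          rfl
        have hg0 : g ≠ 0 := by
          intro h
          apply mem_support_iff.mp hisupp
          rw [← hgt, h, Polynomial.coeff_zero]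
        have hgdeg : g.natDegree ≤ t := le_trans (cw_natDegree_le _ _) Polynomial.natDegree_map_le
        have hdvd : ∀ b ∈ Fq, (Polynomial.X - Polynomial.C b) ^ (μ (Fin.cons b a : Fin (n + 1) → K) - m a) ∣ g := by
          intro b hb
          have hcons : ∀ k : Fin (n + 1), (Fin.cons b a : Fin (n + 1) → K) k ^ q
              = (Fin.cons b a : Fin (n + 1) → K) k := by
            intro k
            refine Fin.cases ?_ ?_ k
            · simpa using (hFq b).mp hb
            · intro j; simpa using haF j
          have hvan : ∀ r, r < μ (Fin.cons b a : Fin (n + 1) → K) - m a → (Polynomial.taylor b g).coeff r = 0 := by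
            intro r hr
            rw [hgdef, taylor_cw_coeff]
            apply mem_J_pow_iff.mp (hμ (Fin.cons b a : Fin (n + 1) → K) hcons)
            rw [wdeg_cons, hiw]
            omega
          have hsum := Polynomial.sum_taylor_eq g b
          rw [← hsum, Polynomial.sum_def]
          apply Finset.dvd_sum
          intro j hj
          apply Dvd.dvd.mul_left
          apply pow_dvd_pow
          by_contra hlt
          push_neg at hlt
          exact Polynomial.mem_support_iff.mp hj (hvan j hlt)
        have hprod : (∏ b ∈ Fq, (Polynomial.X - Polynomial.C b) ^ (μ (Fin.cons b a : Fin (n + 1) → K) - m a)) ∣ g := by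
          apply Finset.prod_dvd_of_coprime
          · intro x hx y hy hxy
            exact ((Polynomial.pairwise_coprime_X_sub_C (Function.injective_id) hxy).pow :)
          · intro b hb
            exact hdvd b hb
        have hdeg : ∑ b ∈ Fq, (μ (Fin.cons b a : Fin (n + 1) → K) - m a) ≤ t := by
          have h1 : (∏ b ∈ Fq, (Polynomial.X - Polynomial.C b) ^ (μ (Fin.cons b a : Fin (n + 1) → K) - m a)).natDegree
              = ∑ b ∈ Fq, (μ (Fin.cons b a : Fin (n + 1) → K) - m a) := by
            rw [Polynomial.natDegree_prod]
            · apply Finset.sum_congr rfl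
              intro b _
              rw [Polynomial.natDegree_pow, Polynomial.natDegree_X_sub_C, mul_one]
            · intro b _
              exact pow_ne_zero _ (Polynomial.X_sub_C_ne_zero b)
          calc ∑ b ∈ Fq, (μ (Fin.cons b a : Fin (n + 1) → K) - m a) = _ := h1.symm
          _ ≤ g.natDegree := Polynomial.natDegree_le_of_dvd hprod hg0
          _ ≤ t := hgdeg
        calc ∑ b ∈ Fq, μ (Fin.cons b a : Fin (n + 1) → K)
            ≤ ∑ b ∈ Fq, ((μ (Fin.cons b a : Fin (n + 1) → K) - m a) + m a) :=
              Finset.sum_le_sum fun b _ => le_tsub_add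
        _ = (∑ b ∈ Fq, (μ (Fin.cons b a : Fin (n + 1) → K) - m a)) + Fq.card * m a := by
              rw [Finset.sum_add_distrib, Finset.sum_const, smul_eq_mul]
        _ ≤ t + q * m a := by
              have := Nat.mul_le_mul_right (m a) hcard
              omega
      -- reindex the sum
      have hreindex : ∑ x ∈ Fintype.piFinset (fun _ : Fin (n + 1) => Fq), μ x
          = ∑ p ∈ Fq ×ˢ Fintype.piFinset (fun _ : Fin n => Fq),
              μ (Fin.cons p.1 p.2 : Fin (n + 1) → K) := by
        refine Finset.sum_bij' (fun x _ => ((x 0 : K), Fin.tail x))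
          (fun p _ => (Fin.cons p.1 p.2 : Fin (n + 1) → K)) ?_ ?_ ?_ ?_ ?_
        · intro x hx
          rw [Finset.mem_product]
          exact ⟨Fintype.mem_piFinset.mp hx 0,
            Fintype.mem_piFinset.mpr fun k => Fintype.mem_piFinset.mp hx k.succ⟩
        · intro p hp
          rw [Finset.mem_product] at hp
          apply Fintype.mem_piFinset.mpr
          intro k
          refine Fin.cases ?_ ?_ k
          · simpa using hp.1
          · intro j
            simpa using Fintype.mem_piFinset.mp hp.2 j
        · intro x hx
          exact Fin.cons_self_tail x
        · intro p hp
          simp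
        · intro x hx
          rw [Fin.cons_self_tail]
      have hcardpi : (Fintype.piFinset (fun _ : Fin n => Fq)).card ≤ q ^ n := by
        rw [Fintype.card_piFinset]
        calc ∏ _i : Fin n, Fq.card ≤ ∏ _i : Fin n, q :=
              Finset.prod_le_prod (fun _ _ => Nat.zero_le _) (fun _ _ => hcard)
        _ = q ^ n := by rw [Finset.prod_const, Finset.card_univ, Fintype.card_fin]
      have hmain : ∑ x ∈ Fintype.piFinset (fun _ : Fin (n + 1) => Fq), μ x
          ≤ q ^ n * t + q * (q ^ (n - 1) * ft.totalDegree) := by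
        calc ∑ x ∈ Fintype.piFinset (fun _ : Fin (n + 1) => Fq), μ x
            = ∑ p ∈ Fq ×ˢ Fintype.piFinset (fun _ : Fin n => Fq),
                μ (Fin.cons p.1 p.2 : Fin (n + 1) → K) := hreindex
        _ = ∑ b ∈ Fq, ∑ a ∈ Fintype.piFinset (fun _ : Fin n => Fq),
                μ (Fin.cons b a : Fin (n + 1) → K) := by rw [Finset.sum_product]
        _ = ∑ a ∈ Fintype.piFinset (fun _ : Fin n => Fq), ∑ b ∈ Fq,
                μ (Fin.cons b a : Fin (n + 1) → K) := Finset.sum_comm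
        _ ≤ ∑ a ∈ Fintype.piFinset (fun _ : Fin n => Fq), (t + q * m a) :=
              Finset.sum_le_sum hfiber
        _ = (Fintype.piFinset (fun _ : Fin n => Fq)).card * t
              + q * ∑ a ∈ Fintype.piFinset (fun _ : Fin n => Fq), m a := by
              rw [Finset.sum_add_distrib, Finset.sum_const, smul_eq_mul, Finset.mul_sum]
        _ ≤ q ^ n * t + q * (q ^ (n - 1) * ft.totalDegree) := by
              have h1 := Nat.mul_le_mul_right t hcardpi
              have h2 := Nat.mul_le_mul_left q hih
              omega
      refine le_trans hmain ?_
      rcases n with _ | k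
      · -- n = 0 : ft is a constant
        have hdeg0 : ft.totalDegree = 0 := by
          obtain ⟨c, hc⟩ := MvPolynomial.C_surjective (Fin 0) ft
          rw [← hc, totalDegree_C]
        have ht : t ≤ f.totalDegree := by
          rw [htdef, hFdef, natDegree_finSuccEquiv]
          exact degreeOf_le_totalDegree f 0
        simp only [hdeg0]
        simpa using ht
      · -- n = k + 1
        have hsum : ft.totalDegree + t ≤ f.totalDegree :=
          totalDegree_coeff_finSuccEquiv_add_le f t hft0
        have hq' : q * q ^ (k + 1 - 1) = q ^ (k + 1) := by
          rw [Nat.add_sub_cancel, ← pow_succ']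
        calc q ^ (k + 1) * t + q * (q ^ (k + 1 - 1) * ft.totalDegree)
            = q ^ (k + 1) * (t + ft.totalDegree) := by
              rw [← mul_assoc, hq', Nat.mul_add]
        _ ≤ q ^ (k + 1) * f.totalDegree := by
              apply Nat.mul_le_mul_left
              omega
        _ = q ^ (k + 1 + 1 - 1) * f.totalDegree := by norm_num


end

end SumMultAux

/-- Claim 5.1: for a polynomial `f` over a field `K` of characteristic `p`, with `q = p^m`,
the sum over all points `a` of the subfield `F = {a : a^q = a}` raised to the `n`-th power
of (lower bounds on) the multiplicities of `f` at those points is at most `q^{n-1}·deg f`. -/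
theorem sum_multiplicities_le
    {K : Type*} [Field K] (p : ℕ) (hp : p.Prime) [CharP K p]
    (q : ℕ) (hq : ∃ m : ℕ, 0 < m ∧ q = p ^ m)
    (n : ℕ) (hn : 1 ≤ n)
    (f : MvPolynomial (Fin n) K) (hf : f ≠ 0)
    (μ : (Fin n → K) → ℕ)
    (hμ : ∀ a : Fin n → K, (∀ i, a i ^ q = a i) →
      f ∈ (Ideal.span (Set.range fun i : Fin n => X i - C (a i))) ^ (μ a))
    (S : Finset (Fin n → K)) (hS : ∀ a : Fin n → K, a ∈ S ↔ ∀ i, a i ^ q = a i) :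
    ∑ a ∈ S, μ a ≤ q ^ (n - 1) * f.totalDegree := by
  classical
  obtain ⟨mexp, hmexp, hqe⟩ := hq
  have hq2 : 2 ≤ q := by
    have h1 : 2 ≤ p := hp.two_le
    have h2 : p ≤ p ^ mexp := Nat.le_self_pow (by omega) p
    omega
  set P : Polynomial K := Polynomial.X ^ q - Polynomial.X with hPdef
  have hP : P ≠ 0 := by
    intro h
    have hc : P.coeff q = 1 := by
      rw [hPdef, Polynomial.coeff_sub, Polynomial.coeff_X_pow, Polynomial.coeff_X]
      simp [show ¬ (1 = q) by omega]
    rw [h, Polynomial.coeff_zero] at hc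
    exact one_ne_zero hc.symm
  set Fq : Finset K := P.roots.toFinset with hFqdef
  have hFq : ∀ x : K, x ∈ Fq ↔ x ^ q = x := by
    intro x
    rw [hFqdef, Multiset.mem_toFinset, Polynomial.mem_roots hP, Polynomial.IsRoot, hPdef]
    rw [Polynomial.eval_sub, Polynomial.eval_pow, Polynomial.eval_X, sub_eq_zero]
  have hcard : Fq.card ≤ q := by
    have h1 : Fq.card ≤ Multiset.card P.roots := Multiset.toFinset_card_le _
    have h2 : Multiset.card P.roots ≤ P.natDegree := Polynomial.card_roots' P
    have h3 : P.natDegree ≤ q := by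
      rw [hPdef]
      refine le_trans (Polynomial.natDegree_sub_le _ _) ?_
      rw [Polynomial.natDegree_X_pow, Polynomial.natDegree_X]
      omega
    omega
  have hSeq : S = Fintype.piFinset (fun _ : Fin n => Fq) := by
    apply Finset.ext
    intro a
    rw [hS, Fintype.mem_piFinset]
    exact forall_congr' fun i => (hFq (a i)).symm
  rw [hSeq]
  exact SumMultAux.key q (by omega) Fq hFq hcard n f hf μ (fun a ha => hμ a ha)
end

section
/- Let k be an algebraically closed field, A a finite commutative group whose order is not divisible by char k, d ≥ 1, and ρ : A → GL_d(k) an injective group homomorphism (a faithful d-dimensional representation). Then A can be generated by d elements: there is a subset S ⊆ A with |S| ≤ d whose generated subgroup is all of A. -/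
open Module


theorem aux_pi_cyclic (m : ℕ) :
    ∀ (A : Type*) [CommGroup A] [Finite A] (C : Type*) [Group C] [IsCyclic C]
      (f : A →* (Fin m → C)), Function.Injective f →
      ∃ S : Finset A, S.card ≤ m ∧ Subgroup.closure (S : Set A) = ⊤ := by
  induction m with
  | zero =>
    intro A _ _ C _ _ f hf
    refine ⟨∅, le_rfl, ?_⟩
    have h1 : ∀ a : A, a = 1 := fun a => hf (funext fun i => i.elim0)
    rw [Finset.coe_empty, Subgroup.closure_empty, eq_top_iff]
    intro a _
    rw [h1 a]
    exact Subgroup.one_mem _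
  | succ m ih =>
    intro A _ _ C _ _ f hf
    classical
    set π : A →* C := (Pi.evalMonoidHom (fun _ => C) (Fin.last m)).comp f with hπ
    set K := π.ker with hK
    let f' : K →* (Fin m → C) :=
      MonoidHom.mk' (fun x => fun i => f x i.castSucc) (by
        intro x y; funext i; simp)
    have hf' : Function.Injective f' := by
      intro x y h
      apply Subtype.ext
      apply hf
      funext i
      refine Fin.lastCases ?_ ?_ i
      · have hx : π x = 1 := x.2
        have hy : π y = 1 := y.2
        simp only [hπ, MonoidHom.comp_apply, Pi.evalMonoidHom_apply] at hx hy
        rw [hx, hy]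
      · intro j
        exact congrFun h j
    obtain ⟨S', hS'card, hS'⟩ := ih K C f' hf'
    obtain ⟨g, hg⟩ := IsCyclic.exists_generator (α := π.range)
    obtain ⟨a, ha⟩ := g.2
    set T : Finset A := insert a (S'.image ((↑) : K → A)) with hT
    have hKle : K ≤ Subgroup.closure (T : Set A) := by
      have h2 : K = Subgroup.closure (K.subtype '' (S' : Set K)) := by
        rw [← MonoidHom.map_closure, hS', ← MonoidHom.range_eq_map, Subgroup.range_subtype]
      rw [h2]
      apply Subgroup.closure_mono
      intro x hx
      obtain ⟨y, hy, rfl⟩ := hx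
      simp only [hT, Finset.coe_insert, Set.mem_insert_iff]
      right
      rw [Finset.coe_image]
      exact Set.mem_image_of_mem _ hy
    have haT : a ∈ Subgroup.closure (T : Set A) :=
      Subgroup.subset_closure (by simp [hT])
    refine ⟨T, ?_, ?_⟩
    · calc T.card ≤ (S'.image ((↑) : K → A)).card + 1 := Finset.card_insert_le _ _
        _ ≤ S'.card + 1 := by gcongr; exact Finset.card_image_le
        _ ≤ m + 1 := by omega
    · rw [eq_top_iff]
      intro x _
      obtain ⟨j, hj⟩ := Subgroup.mem_zpowers_iff.mp (hg ⟨π x, x, rfl⟩)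
      have hj' : π a ^ j = π x := by
        have := congrArg (Subtype.val) hj
        simpa [ha] using this
      have hker : x * (a ^ j)⁻¹ ∈ K := by
        simp only [hK, MonoidHom.mem_ker, map_mul, map_inv, map_zpow]
        rw [hj']
        group
      have hx2 := Subgroup.mul_mem _ (hKle hker) (Subgroup.zpow_mem _ haT j)
      simpa [mul_assoc] using hx2

/-- A finite abelian group of order prime to the characteristic with a faithful
`d`-dimensional representation over an algebraically closed field can be generated by
`d` elements. -/
theorem abelian_group_generated_by_dim_elements
    {k : Type*} [Field k] [IsAlgClosed k]
    (A : Type*) [CommGroup A] [Finite A]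
    (hchar : (Nat.card A : k) ≠ 0)
    (d : ℕ) (hd : 1 ≤ d)
    (ρ : A →* Matrix.GeneralLinearGroup (Fin d) k)
    (hρ : Function.Injective ρ) :
    ∃ S : Finset A, S.card ≤ d ∧ Subgroup.closure (S : Set A) = ⊤ := by
  classical
  set n := Nat.card A with hn
  -- the family of endomorphisms
  let T : Matrix (Fin d) (Fin d) k ≃ₐ[k] Module.End k (Fin d → k) := Matrix.toLinAlgEquiv'
  let F : A →* Module.End k (Fin d → k) :=
    (T.toAlgHom.toRingHom.toMonoidHom).comp ((Units.coeHom _).comp ρ)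
  have hFinj : Function.Injective F := by
    intro a b h
    apply hρ
    apply Units.ext
    exact T.injective h
  have hFn : ∀ a : A, F a ^ n = 1 := by
    intro a
    rw [← map_pow, hn, pow_card_eq_one', map_one]
  have hsq : Squarefree (Polynomial.X ^ n - Polynomial.C (1 : k)) :=
    (Polynomial.separable_X_pow_sub_C (1 : k) hchar one_ne_zero).squarefree
  have hss : ∀ a : A, (F a).IsFinitelySemisimple := by
    intro a
    refine (Module.End.isSemisimple_of_squarefree_aeval_eq_zero hsq ?_).isFinitelySemisimple
    simp [Polynomial.aeval_X_pow, map_sub, map_pow, hFn a]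
  have hcommF : ∀ a b : A, Commute (F a) (F b) := fun a b => (Commute.all a b).map F
  have htop : ⨆ χ : A → k, ⨅ a, (F a).maxGenEigenspace (χ a) = ⊤ :=
    Module.End.iSup_iInf_maxGenEigenspace_eq_top_of_iSup_maxGenEigenspace_eq_top_of_commute F
      (fun a b _ => hcommF a b) (fun a => Module.End.iSup_maxGenEigenspace_eq_top (F a))
  have hind : iSupIndep fun χ : A → k => ⨅ a, (F a).maxGenEigenspace (χ a) :=
    Module.End.independent_iInf_maxGenEigenspace_of_forall_mapsTo F
      (fun a b φ => Module.End.mapsTo_maxGenEigenspace_of_comm (hcommF b a) φ)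
  haveI : Fintype {χ : A → k // (⨅ a, (F a).maxGenEigenspace (χ a)) ≠ ⊥} :=
    hind.fintypeNeBotOfFiniteDimensional
  have hXcard : Fintype.card {χ : A → k // (⨅ a, (F a).maxGenEigenspace (χ a)) ≠ ⊥} ≤ d := by
    have := hind.subtype_ne_bot_le_finrank
    simpa using this
  -- eigenvector data
  set X := {χ : A → k // (⨅ a, (F a).maxGenEigenspace (χ a)) ≠ ⊥} with hX
  have hvec : ∀ χ : X, ∃ v : Fin d → k, v ≠ 0 ∧ ∀ a : A, F a v = χ.1 a • v := by
    intro χ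
    obtain ⟨v, hv, hv0⟩ := Submodule.exists_mem_ne_zero_of_ne_bot χ.2
    refine ⟨v, hv0, fun a => ?_⟩
    have hmem : v ∈ (F a).maxGenEigenspace (χ.1 a) := by
      exact (Submodule.mem_iInf _).mp hv a
    rw [(hss a).maxGenEigenspace_eq_eigenspace] at hmem
    exact Module.End.mem_eigenspace_iff.mp hmem
  choose v hv0 hveig using hvec
  -- eigenvalue characters are multiplicative
  have hmul : ∀ (χ : X) (a b : A), χ.1 (a * b) = χ.1 a * χ.1 b := by
    intro χ a b
    apply smul_left_injective k (hv0 χ)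
    show χ.1 (a * b) • v χ = (χ.1 a * χ.1 b) • v χ
    rw [← hveig χ (a * b), map_mul, Module.End.mul_apply, hveig χ b, map_smul,
      hveig χ a, smul_smul, mul_comm]
  have hone : ∀ χ : X, χ.1 1 = 1 := by
    intro χ
    apply smul_left_injective k (hv0 χ)
    show χ.1 1 • v χ = (1 : k) • v χ
    rw [← hveig χ 1, map_one, Module.End.one_apply, one_smul]
  have hpow : ∀ (χ : X) (a : A) (m : ℕ), χ.1 (a ^ m) = χ.1 a ^ m := by
    intro χ a m
    induction m with
    | zero => simpa using hone χ
    | succ m ih => rw [pow_succ, pow_succ, hmul, ih]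
  have hroot : ∀ (χ : X) (a : A), χ.1 a ^ n = 1 := by
    intro χ a
    rw [← hpow, hn, pow_card_eq_one', hone]
  have hne0 : ∀ (χ : X) (a : A), χ.1 a ≠ 0 := by
    intro χ a h
    have := hroot χ a
    rw [h, zero_pow (by simpa [hn] using Nat.card_pos.ne')] at this
    exact zero_ne_one this
  -- injectivity of the combined character map
  have hinj : ∀ a b : A, (∀ χ : X, χ.1 a = χ.1 b) → a = b := by
    intro a b hab
    have key : ∀ w : Fin d → k, F a w = F b w := by
      intro w
      have hw : w ∈ ⨆ χ : A → k, ⨅ c, (F c).maxGenEigenspace (χ c) := by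
        rw [htop]; trivial
      refine Submodule.iSup_induction (motive := fun w => F a w = F b w) _ hw ?_ (by simp) ?_
      · intro χ w hwmem
        by_cases hbot : (⨅ c, (F c).maxGenEigenspace (χ c)) = ⊥
        · rw [hbot, Submodule.mem_bot] at hwmem
          simp [hwmem]
        · have hwa : w ∈ (F a).maxGenEigenspace (χ a) := (Submodule.mem_iInf _).mp hwmem a
          have hwb : w ∈ (F b).maxGenEigenspace (χ b) := (Submodule.mem_iInf _).mp hwmem b
          rw [(hss a).maxGenEigenspace_eq_eigenspace] at hwa
          rw [(hss b).maxGenEigenspace_eq_eigenspace] at hwb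
          rw [Module.End.mem_eigenspace_iff.mp hwa, Module.End.mem_eigenspace_iff.mp hwb]
          have hcc : χ a = χ b := hab ⟨χ, hbot⟩
          rw [hcc]
      · intro w₁ w₂ h1 h2
        rw [map_add, map_add, h1, h2]
    exact hFinj (LinearMap.ext key)
  -- package the characters into roots of unity
  let C := rootsOfUnity n k
  set m := Fintype.card X with hm
  let e : X ≃ Fin m := Fintype.equivFin X
  let u : A → X → C := fun a χ =>
    ⟨Units.mk0 (χ.1 a) (hne0 χ a), by
      rw [mem_rootsOfUnity]
      apply Units.ext
      simp [hroot χ a]⟩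
  let Ψ : A →* (Fin m → C) := MonoidHom.mk' (fun a i => u a (e.symm i)) (by
    intro a b
    funext i
    apply Subtype.ext
    apply Units.ext
    simp [u, hmul])
  have hΨ : Function.Injective Ψ := by
    intro a b h
    apply hinj
    intro χ
    have h2 := congrFun h (e χ)
    simp only [Ψ, MonoidHom.mk'_apply, Equiv.symm_apply_apply] at h2
    have h3 := congrArg (fun z : C => ((z : kˣ) : k)) h2
    simpa [u] using h3
  haveI : NeZero n := ⟨by simpa [hn] using Nat.card_pos.ne'⟩
  haveI : IsCyclic C := rootsOfUnity.isCyclic k n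
  obtain ⟨S, hScard, hStop⟩ := aux_pi_cyclic m A C Ψ hΨ
  refine ⟨S, le_trans hScard (le_trans (le_of_eq hm) ?_), hStop⟩
  convert hXcard using 2
  rfl
end

section
/- Let k be a field, n ≥ 1, and p ∈ k[t] a polynomial. In k[x,z], the polynomial (z + x·p(x))ⁿ − zⁿ is divisible by x; let Q ∈ k[x,z] be the quotient, so (z + x·p(x))ⁿ = zⁿ + x·Q(x,z). Then the k-algebra endomorphism of R := k[x,y,z]/(x·y − zⁿ) determined by x ↦ x, y ↦ y + Q(x,z), z ↦ z + x·p(x) is well defined and is a k-algebra automorphism of R. -/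
open MvPolynomial

/-- The defining ideal of the `Aₙ₋₁` singularity `x·y − zⁿ = 0`. -/
noncomputable def anIdeal (k : Type*) [Field k] (n : ℕ) : Ideal (MvPolynomial (Fin 3) k) :=
  Ideal.span {(X 0 : MvPolynomial (Fin 3) k) * X 1 - X 2 ^ n}

lemma aeval_of_supported {k : Type*} [CommRing k] {s : Set (Fin 3)}
    (f : Fin 3 → MvPolynomial (Fin 3) k) (hf : ∀ i ∈ s, f i = X i)
    {q : MvPolynomial (Fin 3) k} (hq : q ∈ supported k s) :
    aeval f q = q := by
  refine Algebra.adjoin_induction ?_ ?_ ?_ ?_ hq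
  · rintro x ⟨i, hi, rfl⟩; simp [hf i hi]
  · intro r; simp
  · intro a b _ _ ha hb; simp only [map_add, ha, hb]
  · intro a b _ _ ha hb; simp only [map_mul, ha, hb]

lemma update_fix {k : Type*} [CommRing k] (i : Fin 3) (r : MvPolynomial (Fin 3) k) :
    ∀ j ∈ ({i}ᶜ : Set (Fin 3)), Function.update X i r j = X j := by
  intro j hj
  exact Function.update_of_ne hj _ _

noncomputable def shear {k : Type*} [CommRing k] (i : Fin 3) (q : MvPolynomial (Fin 3) k)
    (hq : q ∈ supported k ({i}ᶜ : Set (Fin 3))) :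
    MvPolynomial (Fin 3) k ≃ₐ[k] MvPolynomial (Fin 3) k :=
  AlgEquiv.ofAlgHom (aeval (Function.update X i (X i + q)))
    (aeval (Function.update X i (X i - q)))
    (by
      apply MvPolynomial.algHom_ext
      intro j
      by_cases h : j = i
      · subst h
        have e1 : aeval (Function.update X j (X j + q)) q = q :=
          aeval_of_supported _ (update_fix j _) hq
        rw [AlgHom.comp_apply, AlgHom.id_apply, aeval_X, Function.update_self, map_sub, aeval_X,
          Function.update_self, e1]
        ring
      · rw [AlgHom.comp_apply, AlgHom.id_apply, aeval_X, Function.update_of_ne h, aeval_X,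
          Function.update_of_ne h])
    (by
      apply MvPolynomial.algHom_ext
      intro j
      by_cases h : j = i
      · subst h
        have e1 : aeval (Function.update X j (X j - q)) q = q :=
          aeval_of_supported _ (update_fix j _) hq
        rw [AlgHom.comp_apply, AlgHom.id_apply, aeval_X, Function.update_self, map_add, aeval_X,
          Function.update_self, e1]
        ring
      · rw [AlgHom.comp_apply, AlgHom.id_apply, aeval_X, Function.update_of_ne h, aeval_X,
          Function.update_of_ne h])

lemma shear_apply {k : Type*} [CommRing k] (i : Fin 3) (q : MvPolynomial (Fin 3) k)
    (hq : q ∈ supported k ({i}ᶜ : Set (Fin 3))) (f : MvPolynomial (Fin 3) k) :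
    shear i q hq f = aeval (Function.update X i (X i + q)) f := rfl

/-- The elementary automorphisms `x ↦ x`, `y ↦ y + Q(x,z)`, `z ↦ z + x·p(x)` of the
`Aₙ₋₁` singularity `k[x,y,z]/(xy − zⁿ)`, where `Q` is the quotient of
`(z + x·p(x))ⁿ − zⁿ` by `x`. -/
theorem an_singularity_elementary_automorphism
    {k : Type*} [Field k] (n : ℕ) (hn : 1 ≤ n) (p : Polynomial k)
    (Q : MvPolynomial (Fin 3) k)
    (hQsupp : Q ∈ MvPolynomial.supported k ({0, 2} : Set (Fin 3)))
    (hQ : (X 2 + X 0 * Polynomial.aeval (X 0 : MvPolynomial (Fin 3) k) p) ^ n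
        = X 2 ^ n + X 0 * Q) :
    ∃ φ : (MvPolynomial (Fin 3) k ⧸ anIdeal k n) ≃ₐ[k] (MvPolynomial (Fin 3) k ⧸ anIdeal k n),
      φ (Ideal.Quotient.mk (anIdeal k n) (X 0)) = Ideal.Quotient.mk (anIdeal k n) (X 0) ∧
      φ (Ideal.Quotient.mk (anIdeal k n) (X 1)) = Ideal.Quotient.mk (anIdeal k n) (X 1 + Q) ∧
      φ (Ideal.Quotient.mk (anIdeal k n) (X 2)) =
        Ideal.Quotient.mk (anIdeal k n) (X 2 + X 0 * Polynomial.aeval (X 0) p) := by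
  set P : MvPolynomial (Fin 3) k := X 0 * Polynomial.aeval (X 0 : MvPolynomial (Fin 3) k) p
    with hP
  -- supports
  have hQ1 : Q ∈ supported k ({1}ᶜ : Set (Fin 3)) := by
    refine supported_mono ?_ hQsupp
    intro x hx
    rcases hx with rfl | hx
    · simp
    · simp at hx; subst hx; simp
  have hP0 : P ∈ supported k ({1}ᶜ ∩ {2}ᶜ : Set (Fin 3)) := by
    have hx0 : (X 0 : MvPolynomial (Fin 3) k) ∈ supported k ({1}ᶜ ∩ {2}ᶜ : Set (Fin 3)) := by
      rw [X_mem_supported]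
      constructor <;> simp
    have haev : Polynomial.aeval (X 0 : MvPolynomial (Fin 3) k) p
        ∈ supported k ({1}ᶜ ∩ {2}ᶜ : Set (Fin 3)) := by
      have := Polynomial.aeval_mem_adjoin_singleton k (x := (X 0 : MvPolynomial (Fin 3) k)) (p := p)
      exact Algebra.adjoin_le (Set.singleton_subset_iff.2 hx0) this
    exact Subalgebra.mul_mem _ hx0 haev
  have hP2 : P ∈ supported k ({2}ᶜ : Set (Fin 3)) :=
    supported_mono Set.inter_subset_right hP0
  have hP1 : P ∈ supported k ({1}ᶜ : Set (Fin 3)) :=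
    supported_mono Set.inter_subset_left hP0
  -- the automorphism of the polynomial ring
  set α : MvPolynomial (Fin 3) k ≃ₐ[k] MvPolynomial (Fin 3) k :=
    (shear 2 P hP2).trans (shear 1 Q hQ1) with hα
  have h0 : α (X 0) = X 0 := by
    rw [hα, AlgEquiv.trans_apply, shear_apply, shear_apply, aeval_X,
      Function.update_of_ne (by decide), aeval_X, Function.update_of_ne (by decide)]
  have h1 : α (X 1) = X 1 + Q := by
    rw [hα, AlgEquiv.trans_apply, shear_apply, shear_apply, aeval_X,
      Function.update_of_ne (by decide), aeval_X, Function.update_self]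
  have h2 : α (X 2) = X 2 + P := by
    have eP : aeval (Function.update X 1 (X 1 + Q)) P = P :=
      aeval_of_supported _ (update_fix 1 _) hP1
    rw [hα, AlgEquiv.trans_apply, shear_apply, shear_apply, aeval_X, Function.update_self,
      map_add, aeval_X, Function.update_of_ne (by decide), eP]
  -- the defining relation is fixed
  have hg : α ((X 0 : MvPolynomial (Fin 3) k) * X 1 - X 2 ^ n)
      = (X 0 : MvPolynomial (Fin 3) k) * X 1 - X 2 ^ n := by
    rw [map_sub, map_mul, map_pow, h0, h1, h2, hP, hQ]
    ring
  have hmap : (anIdeal k n).map (α : MvPolynomial (Fin 3) k →+* MvPolynomial (Fin 3) k)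
      = anIdeal k n := by
    rw [anIdeal, Ideal.map_span, Set.image_singleton]
    exact congrArg (fun t => Ideal.span {t}) hg
  refine ⟨Ideal.quotientEquivAlg (anIdeal k n) (anIdeal k n) α hmap.symm, ?_, ?_, ?_⟩
  · show Ideal.Quotient.mk (anIdeal k n) (α (X 0)) = _
    rw [h0]
  · show Ideal.Quotient.mk (anIdeal k n) (α (X 1)) = _
    rw [h1]
  · show Ideal.Quotient.mk (anIdeal k n) (α (X 2)) = _
    rw [h2]
end

section
/- Let k be a field of characteristic 2 and m ≥ 3 an integer. Then the polynomial y² + x·y + x^m is irreducible in k[x,y]. -/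
open MvPolynomial


theorem irred_aux {k : Type*} [Field k] (m : ℕ) (hm : 3 ≤ m) :
    Irreducible ((Polynomial.X : Polynomial (Polynomial k)) ^ 2
      + Polynomial.C Polynomial.X * Polynomial.X + Polynomial.C (Polynomial.X ^ m)) := by
  set q : Polynomial (Polynomial k) := Polynomial.X ^ 2 + Polynomial.C Polynomial.X * Polynomial.X + Polynomial.C (Polynomial.X ^ m) with hq
  have hq' : q = Polynomial.C 1 * Polynomial.X ^ 2 + Polynomial.C Polynomial.X * Polynomial.X + Polynomial.C (Polynomial.X ^ m) := by rw [hq, Polynomial.C_1, one_mul]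
  have hmonic : q.Monic := by
    unfold Polynomial.Monic
    rw [hq', Polynomial.leadingCoeff_quadratic one_ne_zero]
  have hdeg : q.natDegree = 2 := by
    rw [hq', Polynomial.natDegree_quadratic one_ne_zero]
  by_contra h
  obtain ⟨c₁, c₂, hmul, hadd⟩ := (hmonic.not_irreducible_iff_exists_add_mul_eq_coeff hdeg).mp h
  have hmul' : (Polynomial.X : Polynomial k) ^ m = c₁ * c₂ := by
    rw [hq] at hmul
    simp only [Polynomial.coeff_add, Polynomial.coeff_X_pow, Polynomial.coeff_C_mul, Polynomial.coeff_X, Polynomial.coeff_C] at hmul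
    norm_num at hmul
    exact hmul
  have hadd' : (Polynomial.X : Polynomial k) = c₁ + c₂ := by
    rw [hq] at hadd
    simp only [Polynomial.coeff_add, Polynomial.coeff_X_pow, Polynomial.coeff_C_mul, Polynomial.coeff_X, Polynomial.coeff_C] at hadd
    norm_num at hadd
    exact hadd
  obtain ⟨i, hi, u, hu⟩ := (dvd_prime_pow Polynomial.prime_X m).mp ⟨c₂, hmul'⟩
  obtain ⟨b, hbu, hbc⟩ := Polynomial.isUnit_iff.mp u.isUnit
  have hb : (b : k) ≠ 0 := hbu.ne_zero
  have hc1 : c₁ * Polynomial.C b = Polynomial.X ^ i := by rw [hbc, hu]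
  have hc2 : c₂ = Polynomial.C b * Polynomial.X ^ (m - i) := by
    have hXi : (Polynomial.X : Polynomial k) ^ i ≠ 0 := pow_ne_zero _ Polynomial.X_ne_zero
    apply mul_left_cancel₀ hXi
    calc (Polynomial.X:Polynomial k) ^ i * c₂ = c₁ * Polynomial.C b * c₂ := by rw [hc1]
      _ = Polynomial.C b * (c₁ * c₂) := by ring
      _ = Polynomial.C b * Polynomial.X ^ m := by rw [hmul']
      _ = Polynomial.X ^ i * (Polynomial.C b * Polynomial.X ^ (m - i)) := by
          conv_lhs => rw [← Nat.add_sub_cancel' hi, pow_add]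
          ring
  have hc1' : c₁ = Polynomial.C b⁻¹ * Polynomial.X ^ i := by
    apply mul_right_cancel₀ (show (Polynomial.C b : Polynomial k) ≠ 0 from Polynomial.C_ne_zero.mpr hb)
    rw [hc1, mul_right_comm, ← Polynomial.C_mul, inv_mul_cancel₀ hb, Polynomial.C_1, one_mul]
  rw [hc1', hc2] at hadd'
  by_cases hii : i = m - i
  · have h2 : 2 ≤ i := by omega
    have hcoe := congrArg (fun p => Polynomial.coeff p 1) hadd'
    simp only [Polynomial.coeff_add, Polynomial.coeff_C_mul, Polynomial.coeff_X_pow, Polynomial.coeff_X] at hcoe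
    rw [if_neg (by omega : ¬ (1 : ℕ) = i), if_neg (by omega : ¬ (1:ℕ) = m - i)] at hcoe
    simp at hcoe
  · by_cases h1 : i = 1
    · have h2 : 2 ≤ m - i := by omega
      have hcoe := congrArg (fun p => Polynomial.coeff p (m - i)) hadd'
      simp only [Polynomial.coeff_add, Polynomial.coeff_C_mul, Polynomial.coeff_X_pow, Polynomial.coeff_X] at hcoe
      rw [if_neg (by omega : ¬ (m - i : ℕ) = i), if_neg (by omega : ¬ (1:ℕ) = m - i)] at hcoe
      simp [hb] at hcoe
      exact hb hcoe.symm
    · have hcoe := congrArg (fun p => Polynomial.coeff p i) hadd'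
      simp only [Polynomial.coeff_add, Polynomial.coeff_C_mul, Polynomial.coeff_X_pow, Polynomial.coeff_X] at hcoe
      rw [if_neg (by omega : ¬ (i : ℕ) = m - i), if_neg (by omega : ¬ (1:ℕ) = i)] at hcoe
      simp [hb] at hcoe
      exact hb hcoe.symm

noncomputable def myEquiv (k : Type*) [Field k] :
    MvPolynomial (Fin 2) k ≃ₐ[k] Polynomial (Polynomial k) :=
  (MvPolynomial.renameEquiv k (Equiv.swap (0 : Fin 2) 1)).trans
    ((MvPolynomial.finSuccEquiv k 1).trans
      (Polynomial.mapAlgEquiv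
        ((MvPolynomial.renameEquiv k ((Equiv.equivPUnit (Fin 1) : Fin 1 ≃ PUnit.{1}))).trans
          (MvPolynomial.pUnitAlgEquiv k))))

theorem myEquiv_X0 {k : Type*} [Field k] :
    myEquiv k (MvPolynomial.X 0) = Polynomial.C Polynomial.X := by
  simp only [myEquiv, AlgEquiv.trans_apply, renameEquiv_apply, rename_X]
  rw [Equiv.swap_apply_left]
  have : (1 : Fin 2) = Fin.succ 0 := rfl
  rw [this, finSuccEquiv_X_succ]
  simp [Polynomial.mapAlgEquiv, pUnitAlgEquiv]

theorem myEquiv_X1 {k : Type*} [Field k] :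
    myEquiv k (MvPolynomial.X 1) = Polynomial.X := by
  simp only [myEquiv, AlgEquiv.trans_apply, renameEquiv_apply, rename_X]
  rw [Equiv.swap_apply_right, finSuccEquiv_X_zero]
  simp [Polynomial.mapAlgEquiv]

/-- In characteristic 2, the polynomial `y² + x·y + x^m` is irreducible for `m ≥ 3`. -/
theorem irreducible_y_sq_add_xy_add_x_pow
    {k : Type*} [Field k] [CharP k 2] (m : ℕ) (hm : 3 ≤ m) :
    Irreducible ((X 1 : MvPolynomial (Fin 2) k) ^ 2 + X 0 * X 1 + X 0 ^ m) := by
  have key : myEquiv k ((X 1 : MvPolynomial (Fin 2) k) ^ 2 + X 0 * X 1 + X 0 ^ m)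
      = (Polynomial.X : Polynomial (Polynomial k)) ^ 2
        + Polynomial.C Polynomial.X * Polynomial.X + Polynomial.C (Polynomial.X ^ m) := by
    rw [map_add, map_add, map_mul, map_pow, map_pow, myEquiv_X0, myEquiv_X1, Polynomial.C_pow]
  exact (MulEquiv.irreducible_iff (myEquiv k)).mp (key ▸ irred_aux m hm)
end

section
/- Let k be a field of characteristic 2, and let σ be the k-algebra automorphism of k[x₁,y₁,x₂,y₂] determined by σ(x₁) = x₁, σ(x₂) = x₂, σ(y₁) = y₁ + x₁, σ(y₂) = y₂ + x₂ (an involution since char k = 2). Then the subalgebra of σ-invariant polynomials equals the k-subalgebra generated by the five elements x₁, x₂, y₁² + x₁y₁, y₂² + x₂y₂, and x₁y₂ + x₂y₁. -/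
open MvPolynomial Finset

namespace InvCharTwoAux

variable {k : Type*} [Field k]

local notation "R4" => MvPolynomial (Fin 4) k

/-- helper: finitely supported function on `Fin 4` from four values -/
noncomputable def mk4 (a b c d : ℕ) : Fin 4 →₀ ℕ := Finsupp.equivFunOnFinite.symm ![a, b, c, d]

@[simp] lemma mk4_apply0 (a b c d : ℕ) : mk4 a b c d 0 = a := rfl
@[simp] lemma mk4_apply1 (a b c d : ℕ) : mk4 a b c d 1 = b := rfl
@[simp] lemma mk4_apply2 (a b c d : ℕ) : mk4 a b c d 2 = c := rfl
@[simp] lemma mk4_apply3 (a b c d : ℕ) : mk4 a b c d 3 = d := rfl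

lemma fin4_ext {μ ν : Fin 4 →₀ ℕ} (h0 : μ 0 = ν 0) (h1 : μ 1 = ν 1)
    (h2 : μ 2 = ν 2) (h3 : μ 3 = ν 3) : μ = ν := by
  ext i
  fin_cases i
  · exact h0
  · exact h1
  · exact h2
  · exact h3

lemma mk4_eta (μ : Fin 4 →₀ ℕ) : mk4 (μ 0) (μ 1) (μ 2) (μ 3) = μ :=
  fin4_ext rfl rfl rfl rfl

lemma mk4_inj {a b c d a' b' c' d' : ℕ} (h : mk4 a b c d = mk4 a' b' c' d') :
    a = a' ∧ b = b' ∧ c = c' ∧ d = d' :=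
  ⟨by simpa using DFunLike.congr_fun h 0, by simpa using DFunLike.congr_fun h 1,
   by simpa using DFunLike.congr_fun h 2, by simpa using DFunLike.congr_fun h 3⟩

lemma mk4_sub_single1 (a b c d : ℕ) :
    mk4 a b c d - Finsupp.single 1 1 = mk4 a (b - 1) c d := by
  apply fin4_ext <;>
    simp [Finsupp.tsub_apply, Finsupp.single_apply]

lemma mk4_sub_single3 (a b c d : ℕ) :
    mk4 a b c d - Finsupp.single 3 1 = mk4 a b c (d - 1) := by
  apply fin4_ext <;>
    simp [Finsupp.tsub_apply, Finsupp.single_apply]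

lemma monomial_mk4 (κ : k) (p q r s : ℕ) :
    (monomial (mk4 p q r s) κ : R4) = C κ * X 0 ^ p * X 1 ^ q * X 2 ^ r * X 3 ^ s := by
  have hidx : (0 : Fin 4 →₀ ℕ) + Finsupp.single 0 p + Finsupp.single 1 q
      + Finsupp.single 2 r + Finsupp.single 3 s = mk4 p q r s := by
    apply fin4_ext <;> simp [Finsupp.single_apply]
  rw [C_apply]
  simp only [X_pow_eq_monomial, monomial_mul, hidx, mul_one]

/-- `N₁ = y₁² + x₁ y₁` -/
noncomputable def N1 : R4 := X 1 ^ 2 + X 0 * X 1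
/-- `N₂ = y₂² + x₂ y₂` -/
noncomputable def N2 : R4 := X 3 ^ 2 + X 2 * X 3

/-- the parametrization of `k[x₁,x₂,N₁,N₂]` -/
noncomputable def ψ : MvPolynomial (Fin 4) k →ₐ[k] R4 := aeval ![X 0, X 2, N1, N2]

@[simp] lemma ψ_X0 : (ψ (X 0) : R4) = X 0 := by simp [ψ]
@[simp] lemma ψ_X1 : (ψ (X 1) : R4) = X 2 := by simp [ψ]
@[simp] lemma ψ_X2 : (ψ (X 2) : R4) = N1 := by simp [ψ]
@[simp] lemma ψ_X3 : (ψ (X 3) : R4) = N2 := by simp [ψ]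

lemma N1_pow (c : ℕ) :
    (N1 : R4) ^ c = ∑ j ∈ range (c + 1), (c.choose j : R4) * (X 0 ^ (c - j) * X 1 ^ (c + j)) := by
  have h : (N1 : R4) = X 1 * (X 1 + X 0) := by rw [N1]; ring
  rw [h, mul_pow, add_pow, Finset.mul_sum]
  refine Finset.sum_congr rfl fun j hj => ?_
  rw [pow_add]
  ring

lemma N2_pow (d : ℕ) :
    (N2 : R4) ^ d = ∑ j ∈ range (d + 1), (d.choose j : R4) * (X 2 ^ (d - j) * X 3 ^ (d + j)) := by
  have h : (N2 : R4) = X 3 * (X 3 + X 2) := by rw [N2]; ring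
  rw [h, mul_pow, add_pow, Finset.mul_sum]
  refine Finset.sum_congr rfl fun j hj => ?_
  rw [pow_add]
  ring

lemma psi_monomial (μ : Fin 4 →₀ ℕ) :
    (ψ (monomial μ (1 : k)) : R4) =
      ∑ j ∈ range (μ 2 + 1), ∑ j' ∈ range (μ 3 + 1),
        monomial (mk4 (μ 0 + (μ 2 - j)) (μ 2 + j) (μ 1 + (μ 3 - j')) (μ 3 + j'))
          ((((μ 2).choose j * (μ 3).choose j' : ℕ) : k)) := by
  have h1 : (monomial μ (1 : k) : R4) = C 1 * X 0 ^ (μ 0) * X 1 ^ (μ 1) * X 2 ^ (μ 2) * X 3 ^ (μ 3) := by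
    conv_lhs => rw [← mk4_eta μ]
    exact monomial_mk4 1 _ _ _ _
  rw [h1]
  simp only [map_mul, map_pow, map_one, ψ_X0, ψ_X1, ψ_X2, ψ_X3]
  rw [N1_pow, N2_pow]
  calc 1 * X 0 ^ (μ 0) * X 2 ^ (μ 1)
        * (∑ j ∈ range (μ 2 + 1), ((μ 2).choose j : R4) * (X 0 ^ (μ 2 - j) * X 1 ^ (μ 2 + j)))
        * (∑ j' ∈ range (μ 3 + 1), ((μ 3).choose j' : R4) * (X 2 ^ (μ 3 - j') * X 3 ^ (μ 3 + j')))
      = (X 0 ^ (μ 0) * X 2 ^ (μ 1)) *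
        ((∑ j ∈ range (μ 2 + 1), ((μ 2).choose j : R4) * (X 0 ^ (μ 2 - j) * X 1 ^ (μ 2 + j))) *
         (∑ j' ∈ range (μ 3 + 1), ((μ 3).choose j' : R4) * (X 2 ^ (μ 3 - j') * X 3 ^ (μ 3 + j')))) := by
        ring
    _ = (X 0 ^ (μ 0) * X 2 ^ (μ 1)) * (∑ j ∈ range (μ 2 + 1), ∑ j' ∈ range (μ 3 + 1),
          (((μ 2).choose j : R4) * (X 0 ^ (μ 2 - j) * X 1 ^ (μ 2 + j))) *
          (((μ 3).choose j' : R4) * (X 2 ^ (μ 3 - j') * X 3 ^ (μ 3 + j')))) := by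
        rw [Finset.sum_mul_sum]
    _ = ∑ j ∈ range (μ 2 + 1), ∑ j' ∈ range (μ 3 + 1), (X 0 ^ (μ 0) * X 2 ^ (μ 1)) *
          ((((μ 2).choose j : R4) * (X 0 ^ (μ 2 - j) * X 1 ^ (μ 2 + j))) *
          (((μ 3).choose j' : R4) * (X 2 ^ (μ 3 - j') * X 3 ^ (μ 3 + j')))) := by
        rw [Finset.mul_sum]
        exact Finset.sum_congr rfl fun j _ => Finset.mul_sum _ _ _
    _ = ∑ j ∈ range (μ 2 + 1), ∑ j' ∈ range (μ 3 + 1),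
        monomial (mk4 (μ 0 + (μ 2 - j)) (μ 2 + j) (μ 1 + (μ 3 - j')) (μ 3 + j'))
          ((((μ 2).choose j * (μ 3).choose j' : ℕ) : k)) := by
        refine Finset.sum_congr rfl fun j _ => Finset.sum_congr rfl fun j' _ => ?_
        rw [monomial_mk4]
        have hc : (C (((μ 2).choose j * (μ 3).choose j' : ℕ) : k) : R4)
            = ((μ 2).choose j : R4) * ((μ 3).choose j' : R4) := by
          rw [C_eq_coe_nat]
          push_cast
          ring
        rw [hc, pow_add (X 0 : R4) (μ 0), pow_add (X 2 : R4) (μ 1)]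
        ring


lemma coeff_psi_monomial_top (μ : Fin 4 →₀ ℕ) :
    coeff (mk4 (μ 0) (2 * μ 2) (μ 1) (2 * μ 3)) (ψ (monomial μ (1 : k)) : R4) = 1 := by
  classical
  rw [psi_monomial]
  rw [MvPolynomial.coeff_sum]
  rw [Finset.sum_eq_single (μ 2)]
  · rw [MvPolynomial.coeff_sum]
    rw [Finset.sum_eq_single (μ 3)]
    · rw [coeff_monomial, if_pos]
      · simp
      · apply fin4_ext <;> simp <;> omega
    · intro j' hj' hne
      rw [coeff_monomial, if_neg]
      intro hEq
      obtain ⟨h0, h1, h2, h3⟩ := mk4_inj hEq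
      omega
    · intro h
      exact absurd (Finset.self_mem_range_succ (μ 3)) h
  · intro j hj hne
    rw [MvPolynomial.coeff_sum]
    apply Finset.sum_eq_zero
    intro j' hj'
    rw [coeff_monomial, if_neg]
    intro hEq
    obtain ⟨h0, h1, h2, h3⟩ := mk4_inj hEq
    omega
  · intro h
    exact absurd (Finset.self_mem_range_succ (μ 2)) h

lemma coeff_psi_monomial_ne {μ ν : Fin 4 →₀ ℕ}
    (h : coeff ν (ψ (monomial μ (1 : k)) : R4) ≠ 0) :
    ∃ j j', j ≤ μ 2 ∧ j' ≤ μ 3 ∧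
      ν = mk4 (μ 0 + (μ 2 - j)) (μ 2 + j) (μ 1 + (μ 3 - j')) (μ 3 + j') := by
  classical
  rw [psi_monomial, MvPolynomial.coeff_sum] at h
  obtain ⟨j, hj, h⟩ := Finset.exists_ne_zero_of_sum_ne_zero h
  rw [MvPolynomial.coeff_sum] at h
  obtain ⟨j', hj', h⟩ := Finset.exists_ne_zero_of_sum_ne_zero h
  rw [coeff_monomial] at h
  by_cases hEq : mk4 (μ 0 + (μ 2 - j)) (μ 2 + j) (μ 1 + (μ 3 - j')) (μ 3 + j') = ν
  · exact ⟨j, j', Nat.lt_succ_iff.mp (Finset.mem_range.mp hj),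
      Nat.lt_succ_iff.mp (Finset.mem_range.mp hj'), hEq.symm⟩
  · rw [if_neg hEq] at h
    exact absurd rfl h

lemma coeff_psi (p : MvPolynomial (Fin 4) k) (ν : Fin 4 →₀ ℕ) :
    coeff ν (ψ p : R4) = ∑ μ ∈ p.support, coeff μ p * coeff ν (ψ (monomial μ (1:k)) : R4) := by
  conv_lhs => rw [p.as_sum, map_sum, MvPolynomial.coeff_sum]
  refine Finset.sum_congr rfl fun μ _ => ?_
  have : (monomial μ) (coeff μ p) = coeff μ p • (monomial μ (1:k)) := by
    rw [smul_monomial, smul_eq_mul, mul_one]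
  rw [this, map_smul, coeff_smul, smul_eq_mul]

lemma coeff_psi_eq_zero {p : MvPolynomial (Fin 4) k} {ν : Fin 4 →₀ ℕ}
    (H : ∀ μ ∈ p.support, ∀ j j', j ≤ μ 2 → j' ≤ μ 3 →
      ν ≠ mk4 (μ 0 + (μ 2 - j)) (μ 2 + j) (μ 1 + (μ 3 - j')) (μ 3 + j')) :
    coeff ν (ψ p : R4) = 0 := by
  rw [coeff_psi]
  apply Finset.sum_eq_zero
  intro μ hμ
  rcases eq_or_ne (coeff ν (ψ (monomial μ (1:k)) : R4)) 0 with h | h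
  · rw [h, mul_zero]
  · obtain ⟨j, j', hj, hj', hEq⟩ := coeff_psi_monomial_ne h
    exact absurd hEq (H μ hμ j j' hj hj')

lemma coeff_psi_eq_single {p : MvPolynomial (Fin 4) k} {μs : Fin 4 →₀ ℕ}
    (hμs : μs ∈ p.support)
    (H : ∀ μ ∈ p.support, μ ≠ μs → ∀ j j', j ≤ μ 2 → j' ≤ μ 3 →
      mk4 (μs 0) (2 * μs 2) (μs 1) (2 * μs 3)
        ≠ mk4 (μ 0 + (μ 2 - j)) (μ 2 + j) (μ 1 + (μ 3 - j')) (μ 3 + j')) :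
    coeff (mk4 (μs 0) (2 * μs 2) (μs 1) (2 * μs 3)) (ψ p : R4) = coeff μs p := by
  rw [coeff_psi]
  rw [Finset.sum_eq_single μs]
  · rw [coeff_psi_monomial_top, mul_one]
  · intro μ hμ hne
    rcases eq_or_ne (coeff (mk4 (μs 0) (2 * μs 2) (μs 1) (2 * μs 3)) (ψ (monomial μ (1:k)) : R4)) 0 with h | h
    · rw [h, mul_zero]
    · obtain ⟨j, j', hj, hj', hEq⟩ := coeff_psi_monomial_ne h
      exact absurd hEq (H μ hμ hne j j' hj hj')
  · intro h
    exact absurd hμs h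


lemma indep (p q r : MvPolynomial (Fin 4) k)
    (h : (ψ p : R4) + ψ q * X 1 + ψ r * X 3 = 0) : p = 0 ∧ q = 0 ∧ r = 0 := by
  classical
  by_contra hc
  set L : Finset ℕ := p.support.image (fun μ => 2 * (μ 2 + μ 3)) ∪
      (q.support.image (fun μ => 2 * (μ 2 + μ 3) + 1) ∪
       r.support.image (fun μ => 2 * (μ 2 + μ 3) + 1)) with hLdef
  have hLne : L.Nonempty := by
    rw [not_and_or, not_and_or] at hc
    rcases hc with hp | hq | hr
    · obtain ⟨μ, hμ⟩ := MvPolynomial.support_nonempty.mpr hp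
      exact ⟨2 * (μ 2 + μ 3), Finset.mem_union_left _ (Finset.mem_image_of_mem _ hμ)⟩
    · obtain ⟨μ, hμ⟩ := MvPolynomial.support_nonempty.mpr hq
      exact ⟨2 * (μ 2 + μ 3) + 1,
        Finset.mem_union_right _ (Finset.mem_union_left _ (Finset.mem_image_of_mem _ hμ))⟩
    · obtain ⟨μ, hμ⟩ := MvPolynomial.support_nonempty.mpr hr
      exact ⟨2 * (μ 2 + μ 3) + 1,
        Finset.mem_union_right _ (Finset.mem_union_right _ (Finset.mem_image_of_mem _ hμ))⟩
  set D := L.max' hLne with hDdef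
  have hDmem := L.max'_mem hLne
  have hbp : ∀ μ ∈ p.support, 2 * (μ 2 + μ 3) ≤ D := fun μ hμ =>
    L.le_max' _ (Finset.mem_union_left _ (Finset.mem_image_of_mem _ hμ))
  have hbq : ∀ μ ∈ q.support, 2 * (μ 2 + μ 3) + 1 ≤ D := fun μ hμ =>
    L.le_max' _ (Finset.mem_union_right _ (Finset.mem_union_left _ (Finset.mem_image_of_mem _ hμ)))
  have hbr : ∀ μ ∈ r.support, 2 * (μ 2 + μ 3) + 1 ≤ D := fun μ hμ =>
    L.le_max' _ (Finset.mem_union_right _ (Finset.mem_union_right _ (Finset.mem_image_of_mem _ hμ)))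
  have hcoeff : ∀ ν, coeff ν (ψ p : R4) + coeff ν ((ψ q : R4) * X 1)
      + coeff ν ((ψ r : R4) * X 3) = 0 := by
    intro ν
    rw [← coeff_add, ← coeff_add, h, coeff_zero]
  rcases Finset.mem_union.mp hDmem with hDp | hDqr
  · -- the maximum is attained in p
    obtain ⟨μs, hμs, hws⟩ := Finset.mem_image.mp hDp
    set ν := mk4 (μs 0) (2 * μs 2) (μs 1) (2 * μs 3) with hνdef
    have e1 : coeff ν (ψ p : R4) = coeff μs p := by
      apply coeff_psi_eq_single hμs
      intro μ hμ hne j j' hj hj' hEq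
      obtain ⟨a0, a1, a2, a3⟩ := mk4_inj hEq
      have hb := hbp μ hμ
      exact hne (fin4_ext (by omega) (by omega) (by omega) (by omega))
    have e2 : coeff ν ((ψ q : R4) * X 1) = 0 := by
      rw [coeff_mul_X']
      split_ifs with hsup
      · have hpos : ν 1 ≠ 0 := Finsupp.mem_support_iff.mp hsup
        rw [hνdef, mk4_apply1] at hpos
        rw [hνdef, mk4_sub_single1]
        apply coeff_psi_eq_zero
        intro μ hμ j j' hj hj' hEq
        obtain ⟨a0, a1, a2, a3⟩ := mk4_inj hEq
        have hb := hbq μ hμ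
        omega
      · rfl
    have e3 : coeff ν ((ψ r : R4) * X 3) = 0 := by
      rw [coeff_mul_X']
      split_ifs with hsup
      · have hpos : ν 3 ≠ 0 := Finsupp.mem_support_iff.mp hsup
        rw [hνdef, mk4_apply3] at hpos
        rw [hνdef, mk4_sub_single3]
        apply coeff_psi_eq_zero
        intro μ hμ j j' hj hj' hEq
        obtain ⟨a0, a1, a2, a3⟩ := mk4_inj hEq
        have hb := hbr μ hμ
        omega
      · rfl
    have := hcoeff ν
    rw [e1, e2, e3, add_zero, add_zero] at this
    exact MvPolynomial.mem_support_iff.mp hμs this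
  rcases Finset.mem_union.mp hDqr with hDq | hDr
  · -- the maximum is attained in q
    obtain ⟨μs, hμs, hws⟩ := Finset.mem_image.mp hDq
    set ν := mk4 (μs 0) (2 * μs 2 + 1) (μs 1) (2 * μs 3) with hνdef
    have e1 : coeff ν (ψ p : R4) = 0 := by
      apply coeff_psi_eq_zero
      intro μ hμ j j' hj hj' hEq
      obtain ⟨a0, a1, a2, a3⟩ := mk4_inj hEq
      have hb := hbp μ hμ
      omega
    have e2 : coeff ν ((ψ q : R4) * X 1) = coeff μs q := by
      rw [coeff_mul_X', if_pos (Finsupp.mem_support_iff.mpr (by rw [hνdef, mk4_apply1]; omega))]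
      have hsub : ν - Finsupp.single 1 1 = mk4 (μs 0) (2 * μs 2) (μs 1) (2 * μs 3) := by
        rw [hνdef, mk4_sub_single1, Nat.add_sub_cancel]
      rw [hsub]
      apply coeff_psi_eq_single hμs
      intro μ hμ hne j j' hj hj' hEq
      obtain ⟨a0, a1, a2, a3⟩ := mk4_inj hEq
      have hb := hbq μ hμ
      exact hne (fin4_ext (by omega) (by omega) (by omega) (by omega))
    have e3 : coeff ν ((ψ r : R4) * X 3) = 0 := by
      rw [coeff_mul_X']
      split_ifs with hsup
      · have hpos : ν 3 ≠ 0 := Finsupp.mem_support_iff.mp hsup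
        rw [hνdef, mk4_apply3] at hpos
        rw [hνdef, mk4_sub_single3]
        apply coeff_psi_eq_zero
        intro μ hμ j j' hj hj' hEq
        obtain ⟨a0, a1, a2, a3⟩ := mk4_inj hEq
        have hb := hbr μ hμ
        omega
      · rfl
    have := hcoeff ν
    rw [e1, e2, e3, zero_add, add_zero] at this
    exact MvPolynomial.mem_support_iff.mp hμs this
  · -- the maximum is attained in r
    obtain ⟨μs, hμs, hws⟩ := Finset.mem_image.mp hDr
    set ν := mk4 (μs 0) (2 * μs 2) (μs 1) (2 * μs 3 + 1) with hνdef
    have e1 : coeff ν (ψ p : R4) = 0 := by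
      apply coeff_psi_eq_zero
      intro μ hμ j j' hj hj' hEq
      obtain ⟨a0, a1, a2, a3⟩ := mk4_inj hEq
      have hb := hbp μ hμ
      omega
    have e2 : coeff ν ((ψ q : R4) * X 1) = 0 := by
      rw [coeff_mul_X']
      split_ifs with hsup
      · have hpos : ν 1 ≠ 0 := Finsupp.mem_support_iff.mp hsup
        rw [hνdef, mk4_apply1] at hpos
        rw [hνdef, mk4_sub_single1]
        apply coeff_psi_eq_zero
        intro μ hμ j j' hj hj' hEq
        obtain ⟨a0, a1, a2, a3⟩ := mk4_inj hEq
        have hb := hbq μ hμ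
        omega
      · rfl
    have e3 : coeff ν ((ψ r : R4) * X 3) = coeff μs r := by
      rw [coeff_mul_X', if_pos (Finsupp.mem_support_iff.mpr (by rw [hνdef, mk4_apply3]; omega))]
      have hsub : ν - Finsupp.single 3 1 = mk4 (μs 0) (2 * μs 2) (μs 1) (2 * μs 3) := by
        rw [hνdef, mk4_sub_single3, Nat.add_sub_cancel]
      rw [hsub]
      apply coeff_psi_eq_single hμs
      intro μ hμ hne j j' hj hj' hEq
      obtain ⟨a0, a1, a2, a3⟩ := mk4_inj hEq
      have hb := hbr μ hμ
      exact hne (fin4_ext (by omega) (by omega) (by omega) (by omega))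
    have := hcoeff ν
    rw [e1, e2, e3, zero_add, zero_add] at this
    exact MvPolynomial.mem_support_iff.mp hμs this


/-- the generating set in the theorem statement -/
def Sgen : Set R4 :=
  {X 0, X 2, X 1 ^ 2 + X 0 * X 1, X 3 ^ 2 + X 2 * X 3, X 0 * X 3 + X 2 * X 1}

lemma psi_X_mem (n : Fin 4) : (ψ (X n) : R4) ∈ Algebra.adjoin k Sgen := by
  fin_cases n
  · rw [show ((⟨0, by omega⟩ : Fin 4)) = 0 from rfl, ψ_X0]
    exact Algebra.subset_adjoin (by simp [Sgen])
  · rw [show ((⟨1, by omega⟩ : Fin 4)) = 1 from rfl, ψ_X1]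
    exact Algebra.subset_adjoin (by simp [Sgen])
  · rw [show ((⟨2, by omega⟩ : Fin 4)) = 2 from rfl, ψ_X2, N1]
    exact Algebra.subset_adjoin (by simp [Sgen])
  · rw [show ((⟨3, by omega⟩ : Fin 4)) = 3 from rfl, ψ_X3, N2]
    exact Algebra.subset_adjoin (by simp [Sgen])

lemma psi_mem (p : MvPolynomial (Fin 4) k) : (ψ p : R4) ∈ Algebra.adjoin k Sgen := by
  induction p using MvPolynomial.induction_on with
  | C a =>
      have h1 : (ψ (C a) : R4) = algebraMap k R4 a := by
        simp [ψ, aeval_C]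
      rw [h1]
      exact Subalgebra.algebraMap_mem _ a
  | add p q hp hq =>
      rw [map_add]; exact add_mem hp hq
  | mul_X p n hp =>
      rw [map_mul]; exact mul_mem hp (psi_X_mem n)

lemma two_eq_zero [CharP k 2] : (2 : R4) = 0 := by
  have := CharP.cast_eq_zero (MvPolynomial (Fin 4) k) 2
  exact_mod_cast this

lemma inv_S [CharP k 2] (σ : R4 ≃ₐ[k] R4)
    (hσ0 : σ (X 0) = X 0) (hσ2 : σ (X 2) = X 2)
    (hσ1 : σ (X 1) = X 1 + X 0) (hσ3 : σ (X 3) = X 3 + X 2) :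
    ∀ f ∈ Algebra.adjoin k Sgen, σ f = f := by
  have h2 : (2 : R4) = 0 := two_eq_zero
  intro f hf
  induction hf using Algebra.adjoin_induction with
  | mem x hx =>
      simp only [Sgen, Set.mem_insert_iff, Set.mem_singleton_iff] at hx
      rcases hx with rfl | rfl | rfl | rfl | rfl
      · exact hσ0
      · exact hσ2
      · rw [map_add, map_mul, map_pow, hσ0, hσ1]
        linear_combination (X 0 * X 1 + X 0 ^ 2 : R4) * h2
      · rw [map_add, map_mul, map_pow, hσ2, hσ3]
        linear_combination (X 2 * X 3 + X 2 ^ 2 : R4) * h2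
      · rw [map_add, map_mul, map_mul, hσ0, hσ1, hσ2, hσ3]
        linear_combination (X 0 * X 2 : R4) * h2
  | algebraMap r => exact σ.commutes r
  | add x y hx hy ihx ihy => rw [map_add, ihx, ihy]
  | mul x y hx hy ihx ihy => rw [map_mul, ihx, ihy]

lemma exists_decomp [CharP k 2] (f : R4) :
    ∃ pa pb pc pd : MvPolynomial (Fin 4) k,
      f = ψ pa + ψ pb * X 1 + ψ pc * X 3 + ψ pd * (X 1 * X 3) := by
  have h2 : (2 : R4) = 0 := two_eq_zero
  induction f using MvPolynomial.induction_on with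
  | C a =>
      refine ⟨C a, 0, 0, 0, ?_⟩
      simp [ψ, aeval_C, algebraMap_eq]
  | add f g hf hg =>
      obtain ⟨pa, pb, pc, pd, hf⟩ := hf
      obtain ⟨qa, qb, qc, qd, hg⟩ := hg
      refine ⟨pa + qa, pb + qb, pc + qc, pd + qd, ?_⟩
      rw [hf, hg]
      simp only [map_add]
      ring
  | mul_X f n hf =>
      obtain ⟨pa, pb, pc, pd, hf⟩ := hf
      fin_cases n
      · refine ⟨pa * X 0, pb * X 0, pc * X 0, pd * X 0, ?_⟩
        rw [show ((⟨0, by omega⟩ : Fin 4)) = 0 from rfl, hf]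
        simp only [map_mul, ψ_X0]
        ring
      · refine ⟨pb * X 2, pa + pb * X 0, pd * X 2, pc + pd * X 0, ?_⟩
        rw [show ((⟨1, by omega⟩ : Fin 4)) = 1 from rfl, hf]
        simp only [map_mul, map_add, ψ_X0, ψ_X1, ψ_X2, N1]
        linear_combination (-(ψ pb * (X 0 * X 1) + ψ pd * (X 0 * X 1 * X 3)) : R4) * h2
      · refine ⟨pa * X 1, pb * X 1, pc * X 1, pd * X 1, ?_⟩
        rw [show ((⟨2, by omega⟩ : Fin 4)) = 2 from rfl, hf]
        simp only [map_mul, ψ_X1]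
        ring
      · refine ⟨pc * X 3, pd * X 3, pa + pc * X 1, pb + pd * X 1, ?_⟩
        rw [show ((⟨3, by omega⟩ : Fin 4)) = 3 from rfl, hf]
        simp only [map_mul, map_add, ψ_X1, ψ_X3, N2]
        linear_combination (-(ψ pc * (X 2 * X 3) + ψ pd * (X 2 * X 1 * X 3)) : R4) * h2

lemma prime_X1 : Prime (X 1 : MvPolynomial (Fin 4) k) := by
  let e := (renameEquiv k (Equiv.swap (0 : Fin 4) 1)).trans (finSuccEquiv k 3)
  rw [← MulEquiv.prime_iff e.toMulEquiv]
  have h : e.toMulEquiv (X 1) = Polynomial.X := by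
    show e (X 1) = Polynomial.X
    simp only [e, AlgEquiv.trans_apply, renameEquiv_apply, rename_X, Equiv.swap_apply_right,
      finSuccEquiv_X_zero]
  rw [h]
  exact Polynomial.prime_X

end InvCharTwoAux

open InvCharTwoAux in
/-- The invariants of the characteristic-2 involution
`(x₁, y₁, x₂, y₂) ↦ (x₁, y₁ + x₁, x₂, y₂ + x₂)` of `k[x₁,y₁,x₂,y₂]` are generated by
`x₁, x₂, y₁² + x₁y₁, y₂² + x₂y₂, x₁y₂ + x₂y₁`.  (Variables: `X 0 = x₁`, `X 1 = y₁`,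
`X 2 = x₂`, `X 3 = y₂`.) -/
theorem invariants_char_two_involution
    {k : Type*} [Field k] [CharP k 2]
    (σ : MvPolynomial (Fin 4) k ≃ₐ[k] MvPolynomial (Fin 4) k)
    (hσ0 : σ (X 0) = X 0) (hσ2 : σ (X 2) = X 2)
    (hσ1 : σ (X 1) = X 1 + X 0) (hσ3 : σ (X 3) = X 3 + X 2) :
    ∀ f : MvPolynomial (Fin 4) k, σ f = f ↔
      f ∈ Algebra.adjoin k
        ({X 0, X 2, X 1 ^ 2 + X 0 * X 1, X 3 ^ 2 + X 2 * X 3, X 0 * X 3 + X 2 * X 1} :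
          Set (MvPolynomial (Fin 4) k)) := by
  intro f
  constructor
  · intro hf
    have h2 : (2 : MvPolynomial (Fin 4) k) = 0 := two_eq_zero
    obtain ⟨pa, pb, pc, pd, hdec⟩ := exists_decomp f
    have hS : ∀ g ∈ Algebra.adjoin k Sgen, σ g = g := inv_S σ hσ0 hσ2 hσ1 hσ3
    have ha := hS _ (psi_mem pa)
    have hb := hS _ (psi_mem pb)
    have hcc := hS _ (psi_mem pc)
    have hd := hS _ (psi_mem pd)
    have hσf : σ f = ψ pa + ψ pb * (X 1 + X 0) + ψ pc * (X 3 + X 2)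
        + ψ pd * ((X 1 + X 0) * (X 3 + X 2)) := by
      rw [hdec]
      simp only [map_add, map_mul, hσ1, hσ3, ha, hb, hcc, hd]
    have key : ψ pa + ψ pb * (X 1 + X 0) + ψ pc * (X 3 + X 2)
        + ψ pd * ((X 1 + X 0) * (X 3 + X 2))
        = ψ pa + ψ pb * X 1 + ψ pc * X 3 + ψ pd * (X 1 * X 3) := by
      rw [← hσf, hf, hdec]
    have hrel : ψ (pb * X 0 + pc * X 1 + pd * (X 0 * X 1))
        + ψ (pd * X 1) * X 1 + ψ (pd * X 0) * X 3 = 0 := by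
      simp only [map_add, map_mul, ψ_X0, ψ_X1]
      linear_combination key
    obtain ⟨h1, h2', h3'⟩ := indep _ _ _ hrel
    have hpd : pd = 0 := by
      rcases mul_eq_zero.mp h2' with h | h
      · exact h
      · exact absurd h (X_ne_zero 1)
    rw [hpd] at h1
    have hdvd : (X 1 : MvPolynomial (Fin 4) k) ∣ pb * X 0 :=
      ⟨-pc, by linear_combination h1⟩
    have hdvd2 : (X 1 : MvPolynomial (Fin 4) k) ∣ pb := by
      rcases prime_X1.2.2 _ _ hdvd with h | h
      · exact h
      · exfalso
        rw [X_dvd_X] at h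
        exact absurd h (by decide)
    obtain ⟨G, hG⟩ := hdvd2
    rw [hG] at h1
    have hpc : pc = -(G * X 0) := by
      have hzero : (X 1 : MvPolynomial (Fin 4) k) * (pc + G * X 0) = 0 := by
        linear_combination h1
      rcases mul_eq_zero.mp hzero with h | h
      · exact absurd h (X_ne_zero 1)
      · linear_combination h
    have hf2 : f = ψ pa + ψ G * (X 0 * X 3 + X 2 * X 1) := by
      rw [hdec, hpd, hG, hpc]
      simp only [map_mul, map_neg, map_zero, ψ_X0, ψ_X1]
      linear_combination (-(ψ G * (X 0 * X 3)) : MvPolynomial (Fin 4) k) * h2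
    rw [hf2]
    exact add_mem (psi_mem pa)
      (mul_mem (psi_mem G) (Algebra.subset_adjoin (by simp [Sgen])))
  · intro hf
    exact inv_S σ hσ0 hσ2 hσ1 hσ3 f hf
end

section
/- Let k be an algebraically closed field and G ⊆ GL_n(k) a finite subgroup acting irreducibly on kⁿ (the only G-invariant linear subspaces of kⁿ are 0 and kⁿ), such that every group automorphism of G is inner. Then every M ∈ GL_n(k) with M·G·M⁻¹ = G can be written as M = c·g for some scalar c ∈ kˣ and some g ∈ G. -/
/-!
Conjugation by `M` restricts to an automorphism of `G`, which by hypothesis is conjugation by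
some `g ∈ G`. Then `g⁻¹ M` centralizes `G`, so by Schur's lemma it is a scalar.
-/

open Matrix

theorem Subgroup.exists_inv_mul_mem_centralizer_of_mem_normalizer {K : Type*} [Group K]
    {G : Subgroup K} (hinner : ∀ α : G ≃* G, ∃ g : G, ∀ h : G, α h = g * h * g⁻¹) {M : K}
    (hM : M ∈ normalizer (G : Set K)) : ∃ g ∈ G, g⁻¹ * M ∈ centralizer G := by
  obtain ⟨⟨g, hgG⟩, hg⟩ := hinner (G.normalizerMonoidHom ⟨M, hM⟩)
  refine ⟨g, hgG, mem_centralizer_iff.mpr fun h hh ↦ ?_⟩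
  have hconj : M * h * M⁻¹ = g * h * g⁻¹ := congrArg Subtype.val (hg ⟨h, hh⟩)
  calc h * (g⁻¹ * M) = g⁻¹ * (g * h * g⁻¹) * M := by group
    _ = g⁻¹ * M * h := by rw [← hconj]; group

theorem Module.End.exists_eq_smul_one_of_forall_commute {k V : Type*} [Field k] [IsAlgClosed k]
    [AddCommGroup V] [Module k V] [FiniteDimensional k V] [Nontrivial V] (S : Set (End k V))
    (hS : ∀ W : Submodule k V, (∀ s ∈ S, ∀ v ∈ W, s v ∈ W) → W = ⊥ ∨ W = ⊤)
    (f : End k V) (hf : ∀ s ∈ S, Commute f s) : ∃ c : k, f = c • 1 := by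
  obtain ⟨c, hc⟩ := f.exists_eigenvalue
  have hinv : ∀ s ∈ S, ∀ v ∈ f.eigenspace c, s v ∈ f.eigenspace c := fun s hs _ hv ↦
    mapsTo_genEigenspace_of_comm (hf s hs) c 1 hv
  have htop : f.eigenspace c = ⊤ := (hS _ hinv).resolve_left hc
  exact ⟨c, LinearMap.ext fun v ↦ mem_eigenspace_iff.mp (htop ▸ Submodule.mem_top)⟩

theorem Matrix.GeneralLinearGroup.exists_val_eq_smul_one_of_forall_commute {ι k : Type*}
    [Fintype ι] [DecidableEq ι] [Field k] [IsAlgClosed k] (S : Set (GL ι k))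
    (hS : ∀ W : Submodule k (ι → k), (∀ g ∈ S, ∀ v ∈ W, (g : Matrix ι ι k) *ᵥ v ∈ W) →
      W = ⊥ ∨ W = ⊤)
    (N : GL ι k) (hN : ∀ g ∈ S, Commute N g) : ∃ c : kˣ, (N : Matrix ι ι k) = (c : k) • 1 := by
  cases isEmpty_or_nonempty ι
  · exact ⟨1, Subsingleton.elim _ _⟩
  obtain ⟨c, hc⟩ := Module.End.exists_eq_smul_one_of_forall_commute
    (Set.range fun g : S ↦ Matrix.toLin' ((g : GL ι k) : Matrix ι ι k))
    (fun W hW ↦ hS W fun g hg v hv ↦ by simpa using hW _ ⟨⟨g, hg⟩, rfl⟩ v hv)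
    (Matrix.toLin' N) (by
      rintro _ ⟨⟨g, hg⟩, rfl⟩
      exact (hN g hg).units_val.map Matrix.toLinAlgEquiv')
  have hNc : (N : Matrix ι ι k) = c • 1 :=
    Matrix.toLin'.injective (by simpa [Module.End.one_eq_id] using hc)
  have hc0 : c ≠ 0 := by
    rintro rfl
    exact N.ne_zero (by rw [hNc, zero_smul])
  exact ⟨Units.mk0 c hc0, hNc⟩

theorem normalizer_eq_scalars_mul_self_general
    {k : Type*} [Field k] [IsAlgClosed k] {n : ℕ}
    (G : Subgroup (Matrix.GeneralLinearGroup (Fin n) k))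
    (hirr : ∀ W : Submodule k (Fin n → k),
      (∀ g ∈ G, ∀ v ∈ W, Matrix.mulVec (g : Matrix (Fin n) (Fin n) k) v ∈ W) →
      W = ⊥ ∨ W = ⊤)
    (hinner : ∀ α : G ≃* G, ∃ g : G, ∀ h : G, α h = g * h * g⁻¹) :
    ∀ M : Matrix.GeneralLinearGroup (Fin n) k, M ∈ Subgroup.normalizer (G : Set (Matrix.GeneralLinearGroup (Fin n) k)) →
      ∃ (c : kˣ) (g : Matrix.GeneralLinearGroup (Fin n) k), g ∈ G ∧
        (M : Matrix (Fin n) (Fin n) k) = (c : k) • (g : Matrix (Fin n) (Fin n) k) := by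
  intro M hM
  obtain ⟨g, hgG, hcent⟩ := Subgroup.exists_inv_mul_mem_centralizer_of_mem_normalizer hinner hM
  obtain ⟨c, hc⟩ := GeneralLinearGroup.exists_val_eq_smul_one_of_forall_commute G hirr (g⁻¹ * M)
    fun h hh ↦ (Subgroup.mem_centralizer_iff.mp hcent h hh).symm
  refine ⟨c, g, hgG, ?_⟩
  calc (M : Matrix (Fin n) (Fin n) k) = g * (g⁻¹ * M : GL (Fin n) k) := by simp
    _ = (c : k) • (g : Matrix (Fin n) (Fin n) k) := by rw [hc, mul_smul_comm, mul_one]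

/-- If a finite subgroup `G ⊆ GL_n(k)` over an algebraically closed field acts irreducibly
and every automorphism of `G` is inner, then every element of the normalizer of `G` in
`GL_n(k)` is a scalar multiple of an element of `G`. -/
theorem normalizer_eq_scalars_mul_self
    {k : Type*} [Field k] [IsAlgClosed k] {n : ℕ}
    (G : Subgroup (Matrix.GeneralLinearGroup (Fin n) k)) (hfin : Finite G)
    (hirr : ∀ W : Submodule k (Fin n → k),
      (∀ g ∈ G, ∀ v ∈ W, Matrix.mulVec (g : Matrix (Fin n) (Fin n) k) v ∈ W) →
      W = ⊥ ∨ W = ⊤)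
    (hinner : ∀ α : G ≃* G, ∃ g : G, ∀ h : G, α h = g * h * g⁻¹) :
    ∀ M : Matrix.GeneralLinearGroup (Fin n) k, M ∈ Subgroup.normalizer (G : Set (Matrix.GeneralLinearGroup (Fin n) k)) →
      ∃ (c : kˣ) (g : Matrix.GeneralLinearGroup (Fin n) k), g ∈ G ∧
        (M : Matrix (Fin n) (Fin n) k) = (c : k) • (g : Matrix (Fin n) (Fin n) k) :=
  normalizer_eq_scalars_mul_self_general G hirr hinner
end

section
/- Let k be a field, n ≥ 2, and A ⊆ (kˣ)ⁿ a finite subgroup of the n-fold product of the multiplicative group of k, with coordinate characters χ_i : A → kˣ (projection to the i-th factor). Call an element a ∈ A a pseudo-reflection if exactly one of its coordinates differs from 1. Assume A contains no pseudo-reflection. Then the set of tuples (m₁,…,m_{n−1}) ∈ ℕ^{n−1} such that χₙ(a) = χ₁(a)^{m₁} ⋯ χ_{n−1}(a)^{m_{n−1}} for every a ∈ A is infinite. -/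
/-- A field has enough roots of unity for the exponent of any finite subgroup of a
finite power of its unit group. -/
private lemma hasEnoughRootsOfUnity_of_finite_subgroup {k : Type*} [Field k] {n : ℕ}
    (A : Subgroup (Fin n → kˣ)) [Finite A] :
    HasEnoughRootsOfUnity k (Monoid.exponent A) := by
  set E := Monoid.exponent A with hE
  have hEpos : 0 < E := Monoid.ExponentExists.exponent_pos (Monoid.ExponentExists.of_finite)
  have hcoordpow : ∀ a : A, ∀ i : Fin n, ((a : Fin n → kˣ) i) ^ E = 1 := by
    intro a i
    have h1 : ((a ^ E : A) : Fin n → kˣ) = ((1 : A) : Fin n → kˣ) := by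
      rw [Monoid.pow_exponent_eq_one]
    have h2 : ((a : Fin n → kˣ)) ^ E = 1 := by
      rw [← Subgroup.coe_pow] at *; rw [h1]; rfl
    exact congrFun h2 i
  have hmem : ∀ a : A, ∀ i : Fin n, (a : Fin n → kˣ) i ∈ rootsOfUnity E k := by
    intro a i
    rw [mem_rootsOfUnity]
    exact hcoordpow a i
  obtain ⟨g, hg⟩ := IsCyclic.exists_generator (α := rootsOfUnity E k)
  have hgord : orderOf g = Nat.card (rootsOfUnity E k) :=
    orderOf_eq_card_of_forall_mem_zpowers hg
  set d := Nat.card (rootsOfUnity E k) with hd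
  have hdpos : 0 < d := Nat.card_pos
  have hdvd : E ∣ d := by
    refine Monoid.exponent_dvd_of_forall_pow_eq_one fun a => ?_
    have : ((a : Fin n → kˣ)) ^ d = 1 := by
      funext i
      have hx : ((⟨(a : Fin n → kˣ) i, hmem a i⟩ : rootsOfUnity E k) : kˣ) ^ d = 1 := by
        have := pow_card_eq_one' (x := (⟨(a : Fin n → kˣ) i, hmem a i⟩ : rootsOfUnity E k))
        exact_mod_cast congrArg Subtype.val this
      simpa using hx
    exact Subtype.ext (by rw [Subgroup.coe_pow, this]; rfl)
  have hord : orderOf (((g : kˣ) : k)) = d := by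
    rw [orderOf_units, Subgroup.orderOf_coe]
    exact hgord
  have hprim : IsPrimitiveRoot (((g : kˣ) : k)) d := hord ▸ IsPrimitiveRoot.orderOf _
  obtain ⟨c, hc⟩ := hdvd
  refine ⟨⟨(((g : kˣ) : k)) ^ c, ?_⟩, inferInstance⟩
  exact IsPrimitiveRoot.pow hdpos hprim (by rw [hc, mul_comm])

/-- For a finite subgroup `A ⊆ (kˣ)ⁿ` containing no pseudo-reflection (no element with
exactly one coordinate different from 1), there are infinitely many tuples
`(m₁,…,m_{n−1})` of natural numbers with `χₙ = χ₁^{m₁} ⋯ χ_{n−1}^{m_{n−1}}` on `A`,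
where `χ_i` is the `i`-th coordinate character. -/
theorem infinitely_many_monomial_relations
    {k : Type*} [Field k] (n : ℕ) (hn : 2 ≤ n)
    (A : Subgroup (Fin n → kˣ)) (hfin : Finite A)
    (hA : ∀ a ∈ A, ¬ ∃! i : Fin n, a i ≠ 1) :
    {m : Fin (n - 1) → ℕ | ∀ a ∈ A,
        a (⟨n - 1, by omega⟩ : Fin n) =
          ∏ i : Fin (n - 1), (a (Fin.castLE (by omega) i)) ^ (m i)}.Infinite := by
  classical
  have : Finite A := hfin
  set E := Monoid.exponent A with hE
  have hEpos : 0 < E := Monoid.ExponentExists.exponent_pos (Monoid.ExponentExists.of_finite)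
  set last : Fin n := (⟨n - 1, by omega⟩ : Fin n) with hlast
  set χ : Fin (n - 1) → (A →* kˣ) := fun i =>
    (Pi.evalMonoidHom (fun _ : Fin n => kˣ) (Fin.castLE (by omega) i)).comp A.subtype with hχ
  set ψ : A →* kˣ := (Pi.evalMonoidHom (fun _ : Fin n => kˣ) last).comp A.subtype with hψ
  -- every coordinate of every element of `A` is killed by `E`
  have hcoordpow : ∀ a : A, ∀ i : Fin n, ((a : Fin n → kˣ) i) ^ E = 1 := by
    intro a i
    have h1 : ((a ^ E : A) : Fin n → kˣ) = ((1 : A) : Fin n → kˣ) := by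
      rw [Monoid.pow_exponent_eq_one]
    have h2 : ((a : Fin n → kˣ)) ^ E = 1 := by
      rw [← Subgroup.coe_pow] at *; rw [h1]; rfl
    exact congrFun h2 i
  -- every character of `A` is killed by `E`
  have hDpow : ∀ φ : A →* kˣ, φ ^ E = 1 := by
    intro φ
    refine DFunLike.ext _ _ fun a => ?_
    rw [MonoidHom.pow_apply, MonoidHom.one_apply, ← map_pow,
      Monoid.pow_exponent_eq_one, map_one]
  -- the subgroup of monomial characters
  let H : Subgroup (A →* kˣ) :=
  { carrier := {φ | ∃ e : Fin (n - 1) → ℕ, φ = ∏ i, χ i ^ e i}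
    one_mem' := ⟨0, by simp; exact (Finset.prod_eq_one fun i _ => pow_zero _).symm⟩
    mul_mem' := by
      rintro φ₁ φ₂ ⟨e, rfl⟩ ⟨f, rfl⟩
      refine ⟨e + f, ?_⟩
      rw [← Finset.prod_mul_distrib]
      refine Finset.prod_congr rfl fun i _ => ?_
      rw [Pi.add_apply]; exact (pow_add (M := A →* kˣ) _ _ _).symm
    inv_mem' := by
      rintro φ ⟨e, rfl⟩
      refine ⟨fun i => e i * (E - 1), ?_⟩
      refine DFunLike.ext _ _ fun a => ?_
      simp only [MonoidHom.inv_apply, MonoidHom.finset_prod_apply, MonoidHom.pow_apply]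
      refine inv_eq_of_mul_eq_one_right ?_
      rw [← Finset.prod_mul_distrib]
      refine Finset.prod_eq_one fun i _ => ?_
      have hpt : (χ i a) ^ E = 1 := by
        have := congrArg (fun F : A →* kˣ => F a) (hDpow (χ i))
        simpa using this
      rw [← pow_add]
      have hEE : e i + e i * (E - 1) = e i * E := by
        conv_rhs => rw [show E = 1 + (E - 1) by omega]
        rw [Nat.mul_add, Nat.mul_one]
      rw [hEE, Nat.mul_comm, pow_mul, hpt, one_pow] }
  have hχH : ∀ i, χ i ∈ H := by
    intro i
    refine ⟨fun j => if j = i then 1 else 0, ?_⟩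
    simp [pow_ite]
    rw [Finset.prod_eq_single i (fun j _ hj => by rw [if_neg hj]; exact pow_zero (M := A →* kˣ) _) (by simp), if_pos rfl]
    exact (pow_one (M := A →* kˣ) _).symm
  -- duality for A
  haveI : HasEnoughRootsOfUnity k E := hasEnoughRootsOfUnity_of_finite_subgroup A
  obtain ⟨eD⟩ := CommGroup.monoidHom_mulEquiv_of_hasEnoughRootsOfUnity A k
  haveI : Finite (A →* kˣ) := Finite.of_equiv _ eD.symm.toEquiv
  haveI : Finite H := inferInstance
  have hexpH : Monoid.exponent H ∣ E := by
    refine Monoid.exponent_dvd_of_forall_pow_eq_one fun φ => ?_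
    exact Subtype.ext (by rw [Subgroup.coe_pow, hDpow]; rfl)
  haveI : NeZero E := ⟨hEpos.ne'⟩
  haveI : HasEnoughRootsOfUnity k (Monoid.exponent H) := HasEnoughRootsOfUnity.of_dvd k hexpH
  obtain ⟨eH⟩ := CommGroup.monoidHom_mulEquiv_of_hasEnoughRootsOfUnity H k
  haveI : Finite (H →* kˣ) := Finite.of_equiv _ eH.symm.toEquiv
  -- evaluation map
  let ev : A →* (H →* kˣ) :=
  { toFun := fun a =>
    { toFun := fun φ => (φ : A →* kˣ) a
      map_one' := rfl
      map_mul' := fun φ₁ φ₂ => rfl }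
    map_one' := by ext φ; exact congrArg Units.val (map_one (φ : A →* kˣ))
    map_mul' := fun a b => by ext φ; exact congrArg Units.val (map_mul (φ : A →* kˣ) a b) }
  have hev_inj : Function.Injective ev := by
    intro a b hab
    have hcoord : ∀ i : Fin (n - 1),
        (a : Fin n → kˣ) (Fin.castLE (by omega) i) = (b : Fin n → kˣ) (Fin.castLE (by omega) i) := by
      intro i
      have := congrArg (fun F : H →* kˣ => F ⟨χ i, hχH i⟩) hab
      exact this
    -- consider c = a * b⁻¹
    have hc1 : a * b⁻¹ = 1 := by
      by_contra hc
      have hcoordc : ∀ j : Fin n, j ≠ last → ((a * b⁻¹ : A) : Fin n → kˣ) j = 1 := by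
        intro j hj
        have hjlt : (j : ℕ) < n - 1 := by
          rcases lt_or_eq_of_le (Nat.le_of_lt_succ (by omega : (j : ℕ) < n - 1 + 1)) with h | h
          · exact h
          · exact absurd (Fin.ext h) hj
        have := hcoord ⟨(j : ℕ), hjlt⟩
        have hcast : (Fin.castLE (by omega : n - 1 ≤ n) (⟨(j : ℕ), hjlt⟩ : Fin (n - 1))) = j :=
          Fin.ext rfl
        rw [hcast] at this
        show ((a : Fin n → kˣ) * ((b : Fin n → kˣ))⁻¹) j = 1
        rw [Pi.mul_apply, Pi.inv_apply, this, mul_inv_cancel]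
      -- c ≠ 1, so some coordinate differs from 1 — it must be `last`, a pseudo-reflection
      have hne : ((a * b⁻¹ : A) : Fin n → kˣ) last ≠ 1 := by
        intro h
        apply hc
        refine Subtype.ext (funext fun j => ?_)
        by_cases hj : j = last
        · rw [hj]; exact h
        · exact hcoordc j hj
      exact hA _ (a * b⁻¹ : A).2 ⟨last, hne, fun j hj => by
        by_contra hjne
        exact hj (hcoordc j hjne)⟩
    have := mul_inv_eq_one.mp hc1
    exact this
  -- cardinality chase
  have h1 : Nat.card A ≤ Nat.card (H →* kˣ) := Nat.card_le_card_of_injective ev hev_inj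
  have h2 : Nat.card (H →* kˣ) = Nat.card H := Nat.card_congr eH.toEquiv
  have h3 : Nat.card H ≤ Nat.card (A →* kˣ) :=
    Nat.card_le_card_of_injective _ H.subtype_injective
  have h4 : Nat.card (A →* kˣ) = Nat.card A := Nat.card_congr eD.toEquiv
  have hHtop : H = ⊤ := Subgroup.eq_top_of_card_eq H (by omega)
  have hψH : ψ ∈ H := hHtop ▸ Subgroup.mem_top ψ
  obtain ⟨e0, he0⟩ := hψH
  -- the basic relation
  have hrel : ∀ a ∈ A, a last = ∏ i : Fin (n - 1), (a (Fin.castLE (by omega) i)) ^ (e0 i) := by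
    intro a ha
    have h := congrArg (fun F : A →* kˣ => F ⟨a, ha⟩) he0
    simp only [hψ, hχ, MonoidHom.finset_prod_apply, MonoidHom.pow_apply,
      MonoidHom.coe_comp, Function.comp_apply, Pi.evalMonoidHom_apply,
      Subgroup.coe_subtype] at h
    exact h
  -- infinitely many shifted relations
  refine Set.infinite_of_injective_forall_mem
    (f := fun j : ℕ => fun i : Fin (n - 1) => e0 i + j * E) ?_ ?_
  · intro j₁ j₂ h
    have h0 := congrFun h ⟨0, by omega⟩
    exact Nat.eq_of_mul_eq_mul_right hEpos (Nat.add_left_cancel h0)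
  · intro j
    intro a ha
    have hE1 : ∀ i : Fin n, a i ^ E = 1 := fun i => hcoordpow ⟨a, ha⟩ i
    rw [hrel a ha]
    refine Finset.prod_congr rfl fun i _ => ?_
    have key : ∀ (x : kˣ) (c : ℕ), x ^ E = 1 → x ^ e0 i = x ^ (e0 i + c * E) := by
      intro x c hx
      rw [pow_add, pow_mul', hx, one_pow, mul_one]
    exact key _ j (hE1 _)
end
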